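/- arXiv:1707.08510 — 5 statements merged into one kernel-verified Lean document; each statement's English description precedes it below -/
import Mathlib

section
/- There exists a constant c_A > 0 such that the open set A := {x ∈ ℝ : |(log ρ)''(x)| < ((log ρ)'(x))² and 1/c_A < |(log ρ)'(x)| < c_A} satisfies ρ(A) > 0. -/
open MeasureTheory ProbabilityTheory Filter Set

noncomputable section

/-- The exponentially-weighted sup-norm `‖g‖_{∞,s} = sup_x e^{-s|x|} |g x|`. -/
def normIS (g : ℝ → ℝ) (s : ℝ) : ℝ := ⨆ x : ℝ, Real.exp (-(s * |x|)) * |g x|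

/-- Membership in the space `Sⁿ`: `n`-times continuously differentiable with all
iterated derivatives up to order `n` of sub-exponential growth. -/
def MemS (n : ℕ) (g : ℝ → ℝ) : Prop :=
  ContDiff ℝ n g ∧ ∀ s > (0:ℝ), ∀ i ≤ n,
    BddAbove (Set.range fun x => Real.exp (-(s * |x|)) * |iteratedDeriv i g x|)

/-- A positive sequence is sluggish if it tends to infinity but `a d / √(log d)` stays bounded. -/
def Sluggish (a : ℕ → ℝ) : Prop :=
  (∀ d, 0 < a d) ∧ Tendsto a atTop atTop ∧
    ∃ M : ℝ, ∀ d : ℕ, 2 ≤ d → a d / Real.sqrt (Real.log d) ≤ M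

/-- `(log ρ)'` -/
def dl (ρ : ℝ → ℝ) : ℝ → ℝ := deriv fun x => Real.log (ρ x)

/-- `(log ρ)''` -/
def d2l (ρ : ℝ → ℝ) : ℝ → ℝ := deriv (dl ρ)

/-- `ρ(g) = ∫ g dρ` -/
def rhoE (ρ g : ℝ → ℝ) : ℝ := ∫ x, g x * ρ x

/-- `J = ρ(((log ρ)')²)` -/
def Jc (ρ : ℝ → ℝ) : ℝ := rhoE ρ fun x => (dl ρ x) ^ 2

/-- super-exponential tails: `(x/|x|)·(log ρ)'(x) → -∞` as `|x| → ∞`. -/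
def SuperExpTails (ρ : ℝ → ℝ) : Prop :=
  Tendsto (dl ρ) atTop atBot ∧ Tendsto (dl ρ) atBot atTop

/-- standard normal CDF -/
def stdCDF (t : ℝ) : ℝ := ((gaussianReal 0 1) (Set.Iic t)).toReal

/-- the constant `h(l) = 2l²Φ(-l√J/2)` -/
def hc (ρ : ℝ → ℝ) (l : ℝ) : ℝ := 2 * l ^ 2 * stdCDF (-(l * Real.sqrt (Jc ρ)) / 2)

/-- the limiting (Langevin) generator `G f = (h(l)/2)(f'' + (log ρ)' f')` -/
def Gop (ρ : ℝ → ℝ) (l : ℝ) (f : ℝ → ℝ) (x : ℝ) : ℝ :=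
  hc ρ l / 2 * (deriv (deriv f) x + dl ρ x * deriv f x)

/-- the product measure `ρ_d` on `ℝ^d` -/
def pm (ρ : ℝ → ℝ) (d : ℕ) : Measure (Fin d → ℝ) :=
  Measure.pi fun _ => volume.withDensity fun x => ENNReal.ofReal (ρ x)

/-- law of the proposal `Y ~ N(x, l²/d · I_d)` -/
def gaussPi (l : ℝ) (d : ℕ) (x : Fin d → ℝ) : Measure (Fin d → ℝ) :=
  Measure.pi fun i => gaussianReal (x i) ((l ^ 2 / (d:ℝ)).toNNReal)

/-- the RWM generator `G_d` -/
def Gd (ρ : ℝ → ℝ) (l : ℝ) (d : ℕ) [NeZero d] (f : ℝ → ℝ) (x : Fin d → ℝ) : ℝ :=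
  (d:ℝ) * ∫ y, (f (y 0) - f (x 0)) * min 1 ((∏ i, ρ (y i)) / ∏ i, ρ (x i)) ∂(gaussPi l d x)

/-- the set `A` associated with the constant `c_A` -/
def Aset (ρ : ℝ → ℝ) (c : ℝ) : Set ℝ :=
  {x | |d2l ρ x| < (dl ρ x) ^ 2 ∧ 1 / c < |dl ρ x| ∧ |dl ρ x| < c}

/-- indices `2,…,d` (all coordinates except the first) -/
def restIdx (d : ℕ) : Finset (Fin d) := Finset.univ.filter fun i => (i : ℕ) ≠ 0

/-- the typical sets `𝒜_d` -/
def Ad (ρ : ℝ → ℝ) (c : ℝ) (a : ℕ → ℝ) (d : ℕ) : Set (Fin d → ℝ) :=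
  {x | (1 / ((d : ℝ) - 1)) * ∑ i ∈ restIdx d, Real.exp |x i| < 2 * rhoE ρ (fun t => Real.exp |t|)
    ∧ (∫ t in Aset ρ c, ρ t) / 2 <
        (1 / ((d : ℝ) - 1)) * ∑ i ∈ restIdx d, (Aset ρ c).indicator (fun _ => (1:ℝ)) (x i)
    ∧ (1 / ((d : ℝ) - 1)) * |∑ i ∈ restIdx d, ((dl ρ (x i)) ^ 2 - Jc ρ)| <
        a d / Real.sqrt d * Real.sqrt (3 * rhoE ρ fun t => ((dl ρ t) ^ 2 - Jc ρ) ^ 2)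
    ∧ (1 / ((d : ℝ) - 1)) * |∑ i ∈ restIdx d, (d2l ρ (x i) + Jc ρ)| <
        a d / Real.sqrt d * Real.sqrt (3 * rhoE ρ fun t => (d2l ρ t + Jc ρ) ^ 2)}

/-- `K(x,y)` -/
def Kf (ρ : ℝ → ℝ) (c : ℝ) (x y : ℝ) : ℝ :=
  dl ρ x * (y - x) + d2l ρ x / 2 * (y - x) ^ 2
    + (dl ρ x) ^ 3 * (Aset ρ c).indicator (fun _ => (1:ℝ)) x / 3 * (y - x) ^ 3

/-- `Σ_{i=2}^d K(x_i, Y_i)` -/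
def SK (ρ : ℝ → ℝ) (c : ℝ) (d : ℕ) (x Y : Fin d → ℝ) : ℝ :=
  ∑ i ∈ restIdx d, Kf ρ c (x i) (Y i)

/-- `β(x,y)` -/
def betaF (ρ : ℝ → ℝ) (c l : ℝ) (d : ℕ) [NeZero d] (x : Fin d → ℝ) (y : ℝ) : ℝ :=
  ∫ Y, min 1 (Real.exp (dl ρ (x 0) * (y - x 0) + SK ρ c d x Y)) ∂(gaussPi l d x)

/-- `G̃_d` -/
def tGd (ρ : ℝ → ℝ) (c l : ℝ) (d : ℕ) [NeZero d] (f : ℝ → ℝ) (x : Fin d → ℝ) : ℝ :=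
  (d:ℝ) * ∫ y, (f y - f (x 0)) * betaF ρ c l d x y
    ∂(gaussianReal (x 0) ((l ^ 2 / (d:ℝ)).toNNReal))

/-- `Ĝ_d` -/
def hGd (ρ : ℝ → ℝ) (c l : ℝ) (d : ℕ) [NeZero d] (f : ℝ → ℝ) (x : Fin d → ℝ) : ℝ :=
  l ^ 2 / 2 * deriv (deriv f) (x 0) * (∫ Y, min 1 (Real.exp (SK ρ c d x Y)) ∂(gaussPi l d x))
    + l ^ 2 * deriv f (x 0) * dl ρ (x 0) *
      (∫ Y, (Set.Iio (0:ℝ)).indicator Real.exp (SK ρ c d x Y) ∂(gaussPi l d x))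

/-- `𝒩(x,Y)` -/
def Nf (ρ : ℝ → ℝ) (l : ℝ) (d : ℕ) (x Y : Fin d → ℝ) : ℝ :=
  l ^ 2 / (2 * (d:ℝ)) * ∑ i ∈ restIdx d, d2l ρ (x i)
    + ∑ i ∈ restIdx d, dl ρ (x i) * (Y i - x i)

/-- `Ğ_d` -/
def bGd (ρ : ℝ → ℝ) (l : ℝ) (d : ℕ) [NeZero d] (f : ℝ → ℝ) (x : Fin d → ℝ) : ℝ :=
  l ^ 2 / 2 * deriv (deriv f) (x 0) * (∫ Y, min 1 (Real.exp (Nf ρ l d x Y)) ∂(gaussPi l d x))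
    + l ^ 2 * deriv f (x 0) * dl ρ (x 0) *
      (∫ Y, (Set.Iio (0:ℝ)).indicator Real.exp (Nf ρ l d x Y) ∂(gaussPi l d x))

/-! Since `(log ρ)' → -∞` at `+∞`, pick `a` with `(log ρ)' ≤ -1` on `[a, ∞)`. By the mean value
theorem applied to `1 / (log ρ)'`, which stays in `[-1, 0)` there, some `ξ ∈ (a, a + 1)` has
`|(log ρ)''(ξ)| / (log ρ)'(ξ)² < 1`. For `c = |(log ρ)'(ξ)| + 1` the open set `A` contains `ξ`, and
`ρ > 0` gives it positive mass. -/

theorem exists_mem_Ioo_mul_abs_deriv_lt_sq {g : ℝ → ℝ} {a b : ℝ} (hab : a < b)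
    (hg : Differentiable ℝ g) (hle : ∀ x ∈ Icc a b, g x ≤ -1) :
    ∃ ξ ∈ Ioo a b, (b - a) * |deriv g ξ| < g ξ ^ 2 := by
  have hne : ∀ x ∈ Icc a b, g x ≠ 0 := fun x hx => by linarith [hle x hx]
  obtain ⟨ξ, hξ, hslope⟩ := exists_hasDerivAt_eq_slope (fun x => (g x)⁻¹)
    (fun x => -deriv g x / g x ^ 2) hab (hg.continuous.continuousOn.inv₀ hne)
    fun x hx => (hg x).hasDerivAt.inv (hne x (Ioo_subset_Icc_self hx))
  have hinv_mem : ∀ x ∈ Icc a b, -1 ≤ (g x)⁻¹ ∧ (g x)⁻¹ < 0 := fun x hx =>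
    ⟨by nlinarith [hle x hx, mul_inv_cancel₀ (hne x hx)], inv_lt_zero.mpr (by linarith [hle x hx])⟩
  have hinc : |(g b)⁻¹ - (g a)⁻¹| < 1 := by
    obtain ⟨hb₁, hb₂⟩ := hinv_mem b (right_mem_Icc.mpr hab.le)
    obtain ⟨ha₁, ha₂⟩ := hinv_mem a (left_mem_Icc.mpr hab.le)
    rw [abs_sub_lt_iff]
    constructor <;> linarith
  have hsq : 0 < g ξ ^ 2 := sq_pos_of_ne_zero (hne ξ (Ioo_subset_Icc_self hξ))
  have hslope_abs : |deriv g ξ| / g ξ ^ 2 = |(g b)⁻¹ - (g a)⁻¹| / (b - a) := by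
    rw [← abs_of_pos hsq, ← abs_of_pos (sub_pos.mpr hab), ← abs_div, ← abs_div, ← hslope, neg_div,
      abs_neg]
  rw [div_eq_div_iff hsq.ne' (sub_pos.mpr hab).ne'] at hslope_abs
  refine ⟨ξ, hξ, ?_⟩
  calc (b - a) * |deriv g ξ| = |(g b)⁻¹ - (g a)⁻¹| * g ξ ^ 2 := by rw [mul_comm, hslope_abs]
    _ < g ξ ^ 2 := mul_lt_of_lt_one_left hsq hinc

theorem exists_le_neg_one_abs_deriv_lt_sq {g : ℝ → ℝ} (hg : Differentiable ℝ g)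
    (htop : Tendsto g atTop atBot) : ∃ x, g x ≤ -1 ∧ |deriv g x| < g x ^ 2 := by
  obtain ⟨a, ha⟩ := eventually_atTop.mp (htop.eventually_le_atBot (-1))
  obtain ⟨ξ, hξ, hlt⟩ := exists_mem_Ioo_mul_abs_deriv_lt_sq (lt_add_one a) hg fun x hx => ha x hx.1
  exact ⟨ξ, ha ξ hξ.1.le, by simpa using hlt⟩

theorem IsOpen.setIntegral_pos {X : Type*} [TopologicalSpace X] [MeasurableSpace X]
    [OpensMeasurableSpace X] {μ : Measure X} [μ.IsOpenPosMeasure] {f : X → ℝ} {U : Set X}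
    (hU : IsOpen U) (hne : U.Nonempty) (hf : IntegrableOn f U μ) (hpos : ∀ x ∈ U, 0 < f x) :
    0 < ∫ x in U, f x ∂μ := by
  rw [setIntegral_pos_iff_support_of_nonneg_ae
    (ae_restrict_of_forall_mem hU.measurableSet fun x hx => (hpos x hx).le) hf,
    inter_eq_right.mpr fun x hx => Function.mem_support.mpr (hpos x hx).ne']
  exact hU.measure_pos μ hne

theorem isOpen_Aset {ρ : ℝ → ℝ} (hdl : Continuous (dl ρ)) (hd2l : Continuous (d2l ρ)) (c : ℝ) :
    IsOpen (Aset ρ c) :=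
  (isOpen_lt hd2l.abs (hdl.pow 2)).inter
    ((isOpen_lt continuous_const hdl.abs).inter (isOpen_lt hdl.abs continuous_const))

theorem mem_Aset_abs_add_one {ρ : ℝ → ℝ} {x : ℝ} (hx : |d2l ρ x| < dl ρ x ^ 2)
    (hone : 1 ≤ |dl ρ x|) : x ∈ Aset ρ (|dl ρ x| + 1) := by
  refine ⟨hx, ?_, lt_add_one _⟩
  rw [div_lt_iff₀ (by positivity)]
  nlinarith

theorem stmt3_general (ρ : ℝ → ℝ) (hpos : ∀ x, 0 < ρ x)
    (hint : ∫ x, ρ x = 1) (hlog : MemS 4 fun x => Real.log (ρ x))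
    (htail : SuperExpTails ρ) :
    ∃ c > (0:ℝ), 0 < ∫ x in Aset ρ c, ρ x := by
  have hdl : ContDiff ℝ 1 (dl ρ) := (hlog.1.of_le (by norm_num) : ContDiff ℝ (1 + 1) _).deriv'
  obtain ⟨x₀, hle, hx₀⟩ :=
    exists_le_neg_one_abs_deriv_lt_sq (hdl.differentiable one_ne_zero) htail.1
  have hρ : Integrable ρ := by
    by_contra h
    simp [integral_undef h] at hint
  refine ⟨|dl ρ x₀| + 1, by positivity, ?_⟩
  refine (isOpen_Aset hdl.continuous (hdl.continuous_deriv le_rfl) _).setIntegral_pos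
    ⟨x₀, mem_Aset_abs_add_one hx₀ (le_abs.mpr (Or.inr (by linarith)))⟩ hρ.integrableOn
    fun x _ => hpos x

/-- **Proposition.** There is a constant `c_A > 0` such that the open set
`A = {x : |(log ρ)''(x)| < ((log ρ)'(x))², 1/c_A < |(log ρ)'(x)| < c_A}` has positive
`ρ`-measure. -/
theorem stmt3 (ρ : ℝ → ℝ) (hmeas : Measurable ρ) (hpos : ∀ x, 0 < ρ x)
    (hint : ∫ x, ρ x = 1) (hlog : MemS 4 fun x => Real.log (ρ x))
    (htail : SuperExpTails ρ) :
    ∃ c > (0:ℝ), 0 < ∫ x in Aset ρ c, ρ x :=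
  stmt3_general ρ hpos hint hlog htail
end
end

section
/- Pick x ∈ A and let Y ~ N(x, l²/d) for constants l > 0 and d ∈ ℕ. Then the random variable K(x,Y) has a density q_x, and ‖q_x‖_∞ ≤ 4c_A√d/(3l√(2π)). -/
open MeasureTheory ProbabilityTheory Filter Set

noncomputable section

open scoped NNReal ENNReal

/-!
For `x ∈ A`, write `u = (log ρ)'(x)` and `w = (log ρ)''(x)`, so that `K(x, ·)` is the cubic
`u s + (w/2) s² + (u³/3) s³` in `s = y - x`, with derivative `u + w s + u³ s²`.
Since `w² < u⁴`, completing the square gives `u · (u + w s + u³ s²) ≥ (3/4) u²`; hence `K(x, ·)`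
is a diffeomorphism of `ℝ` whose derivative is at least `(3/4)|u| > 3/(4 c_A)` in absolute value.
By the change of variables formula, `K(x, Y)` has density `q(t) = p(ψ t) / |K'(ψ t)|` with `p` the
Gaussian density and `ψ` the inverse of `K(x, ·)`, and `p ≤ √d / (l √(2π))`.
-/

theorem surjective_of_le_deriv {f f' : ℝ → ℝ} {m : ℝ} (hm : 0 < m)
    (hf : ∀ y, HasDerivAt f (f' y) y) (hf' : ∀ y, m ≤ f' y) : Function.Surjective f := by
  have hmono : Monotone fun t => f t - m * t := by
    have hD : ∀ y, HasDerivAt (fun t => f t - m * t) (f' y - m) y := fun y =>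
      ((hf y).sub ((hasDerivAt_id y).const_mul m)).congr_deriv (by ring)
    refine monotone_of_deriv_nonneg (fun y => (hD y).differentiableAt) fun y => ?_
    rw [(hD y).deriv]
    linarith [hf' y]
  have hlin : Tendsto (fun t => f 0 + m * t) atTop atTop :=
    tendsto_atTop_add_const_left _ _ (tendsto_id.const_mul_atTop hm)
  have hlin' : Tendsto (fun t => f 0 + m * t) atBot atBot :=
    tendsto_atBot_add_const_left _ _ (tendsto_id.const_mul_atBot hm)
  refine (continuous_iff_continuousAt.2 fun y => (hf y).continuousAt).surjective ?_ ?_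
  · refine tendsto_atTop_mono' _ ?_ hlin
    filter_upwards [eventually_ge_atTop 0] with t ht
    linarith [hmono ht]
  · refine tendsto_atBot_mono' _ ?_ hlin'
    filter_upwards [eventually_le_atBot 0] with t ht
    linarith [hmono ht]

/-- Allowing the factor `u` covers decreasing `f` as well. -/
theorem exists_homeomorph_of_le_mul_deriv {f f' : ℝ → ℝ} {u m : ℝ} (hu : u ≠ 0) (hm : 0 < m)
    (hf : ∀ y, HasDerivAt f (f' y) y) (hf' : ∀ y, m ≤ u * f' y) : ∃ e : ℝ ≃ₜ ℝ, ⇑e = f := by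
  have hg : ∀ y, HasDerivAt (fun t => u * f t) (u * f' y) y := fun y => (hf y).const_mul u
  have hmono : StrictMono fun t => u * f t :=
    strictMono_of_deriv_pos fun y => (hg y).deriv ▸ hm.trans_le (hf' y)
  refine ⟨(hmono.orderIsoOfSurjective _ (surjective_of_le_deriv hm hg hf')).toHomeomorph.trans
    (Homeomorph.mulLeft₀ u⁻¹ (inv_ne_zero hu)), ?_⟩
  ext y
  simp [hu]

theorem Homeomorph.map_volume_withDensity_ofReal {e : ℝ ≃ₜ ℝ} {e' : ℝ → ℝ}
    (he : ∀ y, HasDerivAt e (e' y) y) (he' : ∀ y, e' y ≠ 0) (p : ℝ → ℝ) :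
    (volume.withDensity fun y => ENNReal.ofReal (p y)).map e =
      volume.withDensity fun t => ENNReal.ofReal (|e' (e.symm t)|⁻¹ * p (e.symm t)) := by
  have hsymm : ∀ t, HasDerivAt e.symm (e' (e.symm t))⁻¹ t := fun t =>
    (he _).of_local_left_inverse e.symm.continuous.continuousAt (he' _)
      (Eventually.of_forall e.apply_symm_apply)
  ext s hs
  rw [Measure.map_apply e.measurable hs, withDensity_apply _ (hs.preimage e.measurable),
    withDensity_apply _ hs, ← e.image_symm, lintegral_image_eq_lintegral_abs_deriv_mul hs
      (fun t _ => (hsymm t).hasDerivWithinAt) e.symm.injective.injOn]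
  refine setLIntegral_congr_fun hs fun t _ => ?_
  rw [abs_inv, ENNReal.ofReal_mul (by positivity)]

theorem gaussianPDFReal_le_inv_sqrt (μ : ℝ) (v : ℝ≥0) (y : ℝ) :
    gaussianPDFReal μ v y ≤ (√(2 * Real.pi * v))⁻¹ := by
  rw [gaussianPDFReal]
  refine mul_le_of_le_one_right (by positivity) (Real.exp_le_one_iff.2 ?_)
  exact div_nonpos_of_nonpos_of_nonneg (neg_nonpos.2 (sq_nonneg _)) (by positivity)

theorem three_quarters_sq_le_mul_quadratic {u w : ℝ} (h : |w| < u ^ 2) (s : ℝ) :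
    3 / 4 * u ^ 2 ≤ u * (u + w * s + u ^ 3 * s ^ 2) := by
  have hw : w ^ 2 < u ^ 4 := by nlinarith [sq_abs w, abs_nonneg w]
  nlinarith [sq_nonneg (2 * u ^ 3 * s + w), sq_nonneg u]

theorem three_quarters_abs_le_abs_of_sq_le_mul {u a : ℝ} (h : 3 / 4 * u ^ 2 ≤ u * a) :
    3 / 4 * |u| ≤ |a| := by
  have : 3 / 4 * |u| ^ 2 ≤ |u| * |a| := by
    rw [sq_abs, ← abs_mul]
    exact h.trans (le_abs_self _)
  nlinarith [abs_nonneg u, abs_nonneg a]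

theorem hasDerivAt_Kf {ρ : ℝ → ℝ} {c x : ℝ} (hx : x ∈ Aset ρ c) (y : ℝ) :
    HasDerivAt (Kf ρ c x) (dl ρ x + d2l ρ x * (y - x) + dl ρ x ^ 3 * (y - x) ^ 2) y := by
  have hK : Kf ρ c x = fun y =>
      dl ρ x * (y - x) + d2l ρ x / 2 * (y - x) ^ 2 + dl ρ x ^ 3 / 3 * (y - x) ^ 3 := by
    ext y
    simp [Kf, Set.indicator_of_mem hx]
  have hs : HasDerivAt (fun y : ℝ => y - x) 1 y := (hasDerivAt_id y).sub_const x
  rw [hK]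
  refine (((hs.const_mul _).add ((hs.pow 2).const_mul _)).add
    ((hs.pow 3).const_mul _)).congr_deriv ?_
  norm_num
  ring

theorem sqrt_two_pi_mul_sq_div {l : ℝ} (hl : 0 ≤ l) (d : ℝ) :
    √(2 * Real.pi * (l ^ 2 / d)) = √(2 * Real.pi) * l / √d := by
  rw [← mul_div_assoc, Real.sqrt_div (by positivity), Real.sqrt_mul (by positivity),
    Real.sqrt_sq hl]

theorem stmt9_general (ρ : ℝ → ℝ)
    (c : ℝ)
    (l : ℝ) (hl : 0 < l) (d : ℕ) (hd : 0 < d)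
    (x : ℝ) (hx : x ∈ Aset ρ c) :
    ∃ q : ℝ → ℝ, Measurable q ∧
      Measure.map (fun y => Kf ρ c x y) (gaussianReal x ((l ^ 2 / (d:ℝ)).toNNReal)) =
        volume.withDensity (fun t => ENNReal.ofReal (q t)) ∧
      ∀ᵐ t ∂(volume : Measure ℝ),
        |q t| ≤ 4 * c * Real.sqrt d / (3 * l * Real.sqrt (2 * Real.pi)) := by
  obtain ⟨hw, hcu, huc⟩ := id hx
  set u := dl ρ x
  set K' : ℝ → ℝ := fun y => u + d2l ρ x * (y - x) + u ^ 3 * (y - x) ^ 2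
  set v : ℝ≥0 := (l ^ 2 / (d:ℝ)).toNNReal
  have hc : 0 < c := (abs_nonneg u).trans_lt huc
  have hu : 0 < |u| := (one_div_pos.2 hc).trans hcu
  have hlow : ∀ y, 3 / 4 * u ^ 2 ≤ u * K' y := fun y => three_quarters_sq_le_mul_quadratic hw _
  have hK' : ∀ y, 3 / (4 * c) < |K' y| := fun y =>
    calc 3 / (4 * c) = 3 / 4 * (1 / c) := by ring
      _ < 3 / 4 * |u| := by linarith
      _ ≤ |K' y| := three_quarters_abs_le_abs_of_sq_le_mul (hlow y)
  obtain ⟨e, he⟩ := exists_homeomorph_of_le_mul_deriv (abs_pos.1 hu)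
    (by nlinarith [sq_abs u, pow_pos hu 2]) (hasDerivAt_Kf hx) hlow
  have hv : (v : ℝ) = l ^ 2 / d := Real.coe_toNNReal _ (by positivity)
  have hv0 : v ≠ 0 := by simpa [v] using div_pos (pow_pos hl 2) (Nat.cast_pos.2 hd)
  refine ⟨fun t => |K' (e.symm t)|⁻¹ * gaussianPDFReal x v (e.symm t), by fun_prop, ?_,
    Eventually.of_forall fun t => ?_⟩
  · rw [gaussianReal_of_var_ne_zero x hv0, ← he]
    exact e.map_volume_withDensity_ofReal (he ▸ hasDerivAt_Kf hx)
      (fun y => abs_pos.1 ((by positivity : (0:ℝ) < 3 / (4 * c)).trans (hK' y))) _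
  calc |(|K' (e.symm t)|⁻¹ * gaussianPDFReal x v (e.symm t))|
      = |K' (e.symm t)|⁻¹ * gaussianPDFReal x v (e.symm t) :=
        abs_of_nonneg (mul_nonneg (by positivity) (gaussianPDFReal_nonneg _ _ _))
    _ ≤ (3 / (4 * c))⁻¹ * (√(2 * Real.pi * v))⁻¹ :=
        mul_le_mul (inv_anti₀ (by positivity) (hK' _).le) (gaussianPDFReal_le_inv_sqrt _ _ _)
          (gaussianPDFReal_nonneg _ _ _) (by positivity)
    _ = 4 * c * √d / (3 * l * √(2 * Real.pi)) := by
        rw [hv, sqrt_two_pi_mul_sq_div hl.le]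
        field_simp

/-- **Lemma.** For `x ∈ A` and `Y ~ N(x, l²/d)`, the random variable `K(x,Y)` has a density
`q_x` with `‖q_x‖_∞ ≤ 4 c_A √d / (3 l √(2π))`. -/
theorem stmt9 (ρ : ℝ → ℝ) (hmeas : Measurable ρ) (hpos : ∀ x, 0 < ρ x)
    (hint : ∫ x, ρ x = 1) (hlog : MemS 4 fun x => Real.log (ρ x))
    (htail : SuperExpTails ρ)
    (c : ℝ) (hc : 0 < c) (hA : 0 < ∫ x in Aset ρ c, ρ x)
    (l : ℝ) (hl : 0 < l) (d : ℕ) (hd : 0 < d)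
    (x : ℝ) (hx : x ∈ Aset ρ c) :
    ∃ q : ℝ → ℝ, Measurable q ∧
      Measure.map (fun y => Kf ρ c x y) (gaussianReal x ((l ^ 2 / (d:ℝ)).toNNReal)) =
        volume.withDensity (fun t => ENNReal.ofReal (q t)) ∧
      ∀ᵐ t ∂(volume : Measure ℝ),
        |q t| ≤ 4 * c * Real.sqrt d / (3 * l * Real.sqrt (2 * Real.pi)) :=
  stmt9_general ρ c l hl d hd x hx
end
end

section
/- Let ρ be a strictly positive probability density on ℝ satisfying lim_{|x|→∞} (x/|x|)·(log ρ)'(x) = −∞, and suppose log ρ ∈ S^{n_ρ} and f ∈ S^{n_f} for some integers n_ρ, n_f ∈ ℕ∪{0}. Then the function f̂(x) := ∫₀^x (2/(h(l)ρ(y))) ∫_{−∞}^y ρ(z)(ρ(f)−f(z)) dz dy belongs to S^{min(n_f+2, n_ρ+1)}. -/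
open MeasureTheory ProbabilityTheory Filter Set

noncomputable section

/-- the solution `f̂` of the Poisson equation for the limiting Langevin diffusion -/
def fhat (ρ : ℝ → ℝ) (l : ℝ) (f : ℝ → ℝ) (x : ℝ) : ℝ :=
  ∫ y in (0:ℝ)..x, 2 / (hc ρ l * ρ y) * ∫ z in Set.Iic y, ρ z * (rhoE ρ f - f z)


/-!
Write `L = log ρ` and `g = ρ(f) - f`. Then `f̂' = (2 / h(l)) w` with
`w(x) = e^{-L(x)} ∫_{-∞}^x e^{L} g`, which solves `w' = g - L' w`. Since `Sⁿ` is closed under sums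
and products, this equation bootstraps the regularity of `w` up to order `min(n_f + 1, n_ρ)`, once
`w` itself is known to grow subexponentially. For that, the super-exponential tails give
`L(z) ≤ L(x) - (s + 1)(z - x)` for `X ≤ x ≤ z`, hence `e^{-L(x)} ∫_x^∞ e^{L} |g| ≤ C e^{s x}`; on
the right half-line one uses `∫ e^{L} g = 0` to trade `∫_{-∞}^x` for `-∫_x^∞`, and the left
half-line is the mirror image. One more integration gives `f̂ ∈ S^{min(n_f + 2, n_ρ + 1)}`.
-/

open Asymptotics Real

def SubexpGrowth (g : ℝ → ℝ) : Prop := ∀ s > (0 : ℝ), g =O[⊤] fun x => exp (s * |x|)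

namespace SubexpGrowth

variable {g g₁ g₂ : ℝ → ℝ}

theorem exists_bound (h : SubexpGrowth g) {s : ℝ} (hs : 0 < s) :
    ∃ C, 0 ≤ C ∧ ∀ x, |g x| ≤ C * exp (s * |x|) := by
  obtain ⟨C, hC⟩ := isBigO_top.1 (h s hs)
  simp only [Real.norm_eq_abs, abs_exp] at hC
  exact ⟨C, by simpa using (abs_nonneg _).trans (hC 0), hC⟩

theorem const (c : ℝ) : SubexpGrowth fun _ => c := fun s hs =>
  isBigO_top.2 ⟨|c|, fun x => by
    rw [norm_of_nonneg (exp_pos _).le, Real.norm_eq_abs]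
    exact le_mul_of_one_le_right (abs_nonneg c) (one_le_exp (by positivity))⟩

theorem add (h₁ : SubexpGrowth g₁) (h₂ : SubexpGrowth g₂) :
    SubexpGrowth fun x => g₁ x + g₂ x := fun s hs => (h₁ s hs).add (h₂ s hs)

theorem mul (h₁ : SubexpGrowth g₁) (h₂ : SubexpGrowth g₂) :
    SubexpGrowth fun x => g₁ x * g₂ x := fun s hs =>
  ((h₁ (s / 2) (by positivity)).mul (h₂ (s / 2) (by positivity))).congr_right fun x => by
    rw [← exp_add]; ring_nf

theorem comp_neg (h : SubexpGrowth g) : SubexpGrowth fun x => g (-x) := fun s hs =>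
  ((h s hs).comp_tendsto (tendsto_top (f := fun x : ℝ => -x))).congr_right fun x => by
    simp

theorem of_isBigO_cocompact (hc : Continuous g)
    (h : ∀ s > (0 : ℝ), g =O[cocompact ℝ] fun x => exp (s * |x|)) : SubexpGrowth g := by
  intro s hs
  have hbdd : Bornology.IsBounded (range fun x => g x * exp (-(s * |x|))) := by
    refine (Continuous.isBounded_range_iff_isBigO (by fun_prop)).2 ?_
    refine ((h s hs).mul (isBigO_refl (fun x => exp (-(s * |x|))) _)).congr_right fun x => ?_
    rw [← exp_add, add_neg_cancel, exp_zero, Pi.one_apply]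
  obtain ⟨C, hC⟩ := isBounded_iff_forall_norm_le.1 hbdd
  refine isBigO_top.2 ⟨C, fun x => ?_⟩
  have := hC _ (mem_range_self x)
  rwa [norm_mul, norm_of_nonneg (exp_pos _).le, exp_neg, ← div_eq_mul_inv,
    div_le_iff₀ (exp_pos _), ← norm_of_nonneg (exp_pos (s * |x|)).le] at this

theorem intervalIntegral (h : SubexpGrowth g) : SubexpGrowth fun x => ∫ y in (0 : ℝ)..x, g y := by
  intro s hs
  obtain ⟨C, hC0, hC⟩ := h.exists_bound (half_pos hs)
  refine isBigO_top.2 ⟨C * (2 / s), fun x => ?_⟩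
  have hbound : ∀ y ∈ uIoc 0 x, ‖g y‖ ≤ C * exp (s / 2 * |x|) := fun y hy => by
    have hyx : |y| ≤ |x| := by
      rcases mem_uIoc.1 hy with ⟨h0, h1⟩ | ⟨h0, h1⟩ <;>
        exact abs_le.2 ⟨by linarith [neg_abs_le x, abs_nonneg x],
          by linarith [le_abs_self x, abs_nonneg x]⟩
    exact (hC y).trans (by gcongr)
  have habs : |x| ≤ 2 / s * exp (s / 2 * |x|) := by
    have := add_one_le_exp (s / 2 * |x|)
    rw [div_mul_eq_mul_div, le_div_iff₀ hs]
    nlinarith [abs_nonneg x]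
  calc ‖∫ y in (0 : ℝ)..x, g y‖ ≤ C * exp (s / 2 * |x|) * |x - 0| :=
        intervalIntegral.norm_integral_le_of_norm_le_const hbound
    _ ≤ C * exp (s / 2 * |x|) * (2 / s * exp (s / 2 * |x|)) := by rw [sub_zero]; gcongr
    _ = C * (2 / s) * ‖exp (s * |x|)‖ := by
        rw [norm_of_nonneg (exp_pos _).le, mul_mul_mul_comm, ← exp_add]; ring_nf

end SubexpGrowth

theorem bddAbove_range_exp_neg_mul_iff_isBigO {g : ℝ → ℝ} {s : ℝ} :
    BddAbove (range fun x => exp (-(s * |x|)) * |g x|) ↔ g =O[⊤] fun x => exp (s * |x|) := by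
  simp only [bddAbove_def, forall_mem_range, isBigO_top, Real.norm_eq_abs, abs_exp]
  refine exists_congr fun C => forall_congr' fun x => ?_
  rw [exp_neg, inv_mul_le_iff₀ (exp_pos _), mul_comm]

section MemS

variable {n m : ℕ} {g g₁ g₂ : ℝ → ℝ}

theorem memS_iff : MemS n g ↔ ContDiff ℝ n g ∧ ∀ i ≤ n, SubexpGrowth (iteratedDeriv i g) := by
  simp only [MemS, SubexpGrowth, bddAbove_range_exp_neg_mul_iff_isBigO]
  exact and_congr_right fun _ => forall₂_comm

theorem memS_zero_iff : MemS 0 g ↔ Continuous g ∧ SubexpGrowth g := by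
  simp [memS_iff, contDiff_zero]

theorem memS_succ_iff :
    MemS (n + 1) g ↔ Differentiable ℝ g ∧ SubexpGrowth g ∧ MemS n (deriv g) := by
  have hsplit : (∀ i ≤ n + 1, SubexpGrowth (iteratedDeriv i g)) ↔
      SubexpGrowth g ∧ ∀ i ≤ n, SubexpGrowth (iteratedDeriv i (deriv g)) := by
    simp only [← iteratedDeriv_succ']
    refine ⟨fun h => ⟨h 0 (n + 1).zero_le, fun i hi => h (i + 1) (by omega)⟩,
      fun ⟨h0, h⟩ i hi => ?_⟩
    rcases i with _ | i
    · exact h0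
    · exact h i (by omega)
  rw [memS_iff, memS_iff, hsplit, Nat.cast_succ, contDiff_succ_iff_deriv]
  simp only [WithTop.natCast_ne_top, false_imp_iff, true_and]
  tauto

theorem MemS.of_le (h : MemS n g) (hmn : m ≤ n) : MemS m g :=
  ⟨h.1.of_le (by exact_mod_cast hmn), fun s hs i hi => h.2 s hs i (hi.trans hmn)⟩

theorem MemS.continuous (h : MemS n g) : Continuous g := (memS_zero_iff.1 (h.of_le n.zero_le)).1

theorem MemS.subexpGrowth (h : MemS n g) : SubexpGrowth g :=
  (memS_zero_iff.1 (h.of_le n.zero_le)).2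

theorem memS_const (n : ℕ) (c : ℝ) : MemS n fun _ => c := by
  induction n generalizing c with
  | zero => exact memS_zero_iff.2 ⟨continuous_const, SubexpGrowth.const c⟩
  | succ n ih =>
    refine memS_succ_iff.2 ⟨differentiable_const c, SubexpGrowth.const c, ?_⟩
    simpa only [deriv_const'] using ih 0

theorem MemS.add (h₁ : MemS n g₁) (h₂ : MemS n g₂) : MemS n fun x => g₁ x + g₂ x := by
  induction n generalizing g₁ g₂ with
  | zero =>
    rw [memS_zero_iff] at *
    exact ⟨h₁.1.add h₂.1, h₁.2.add h₂.2⟩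
  | succ n ih =>
    rw [memS_succ_iff] at *
    obtain ⟨d₁, s₁, h₁⟩ := h₁
    obtain ⟨d₂, s₂, h₂⟩ := h₂
    refine ⟨d₁.add d₂, s₁.add s₂, ?_⟩
    simpa only [funext fun x => deriv_fun_add (d₁ x) (d₂ x)] using ih h₁ h₂

theorem MemS.mul (h₁ : MemS n g₁) (h₂ : MemS n g₂) : MemS n fun x => g₁ x * g₂ x := by
  induction n generalizing g₁ g₂ with
  | zero =>
    rw [memS_zero_iff] at *
    exact ⟨h₁.1.mul h₂.1, h₁.2.mul h₂.2⟩
  | succ n ih =>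
    have h₁' := h₁.of_le n.le_succ
    have h₂' := h₂.of_le n.le_succ
    rw [memS_succ_iff] at h₁ h₂ ⊢
    obtain ⟨d₁, s₁, h₁⟩ := h₁
    obtain ⟨d₂, s₂, h₂⟩ := h₂
    refine ⟨d₁.mul d₂, s₁.mul s₂, ?_⟩
    simpa only [funext fun x => deriv_fun_mul (d₁ x) (d₂ x)] using (ih h₁ h₂').add (ih h₁' h₂)

theorem MemS.neg (h : MemS n g) : MemS n fun x => -g x := by
  simpa using (memS_const n (-1)).mul h

theorem MemS.sub (h₁ : MemS n g₁) (h₂ : MemS n g₂) : MemS n fun x => g₁ x - g₂ x := by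
  simpa only [sub_eq_add_neg] using h₁.add h₂.neg

theorem MemS.intervalIntegral (h : MemS n g) : MemS (n + 1) fun x => ∫ y in (0 : ℝ)..x, g y := by
  have hg := h.continuous
  refine memS_succ_iff.2 ⟨fun x => (hg.integral_hasStrictDerivAt 0 x).hasDerivAt.differentiableAt,
    h.subexpGrowth.intervalIntegral, ?_⟩
  simpa only [funext (hg.deriv_integral (a := 0))] using h

end MemS

section Tails

variable {L g : ℝ → ℝ}

theorem exists_le_sub_mul_of_tendsto_deriv_atBot (hL : Continuous L)
    (h : Tendsto (deriv L) atTop atBot) (m : ℝ) :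
    ∃ X, ∀ x z, X ≤ x → x ≤ z → L z ≤ L x - m * (z - x) := by
  obtain ⟨X, hX⟩ := eventually_atTop.1 (h.eventually (eventually_le_atBot (min (-m) (-1))))
  have hderiv : ∀ t ∈ interior (Ici X), deriv L t ≤ -m := fun t ht =>
    (hX t (interior_subset ht)).trans (min_le_left _ _)
  have hdiff : DifferentiableOn ℝ L (interior (Ici X)) := fun t ht =>
    (differentiableAt_of_deriv_ne_zero ((hX t (interior_subset ht)).trans_lt
      ((min_le_right _ _).trans_lt (by norm_num))).ne).differentiableWithinAt
  refine ⟨X, fun x z hx hxz => ?_⟩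
  have := (convex_Ici X).image_sub_le_mul_sub_of_deriv_le hL.continuousOn hdiff hderiv
    x hx z (hx.trans hxz) hxz
  linarith

theorem tendsto_deriv_comp_neg (h : Tendsto (deriv L) atBot atTop) :
    Tendsto (deriv fun x => L (-x)) atTop atBot := by
  rw [funext fun x => deriv_comp_neg (f := L) (x := x)]
  exact tendsto_neg_atTop_atBot.comp (h.comp tendsto_neg_atTop_atBot)

theorem isBigO_exp_mul_atTop (hL : Continuous L) (h : Tendsto (deriv L) atTop atBot)
    (hg : SubexpGrowth g) : (fun x => exp (L x) * g x) =O[atTop] fun x => exp (-x) := by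
  obtain ⟨X, hX⟩ := exists_le_sub_mul_of_tendsto_deriv_atBot hL h 2
  obtain ⟨C, hC0, hC⟩ := hg.exists_bound one_pos
  refine IsBigO.of_bound (C * exp (L X + 2 * X)) ?_
  filter_upwards [eventually_ge_atTop (max X 0)] with x hx
  have hxX : X ≤ x := le_of_max_le_left hx
  have hx0 : 0 ≤ x := le_of_max_le_right hx
  have hexp : exp (L X - 2 * (x - X)) * exp x = exp (L X + 2 * X) * exp (-x) := by
    rw [← exp_add, ← exp_add]; ring_nf
  rw [norm_mul, Real.norm_eq_abs, Real.norm_eq_abs, Real.norm_eq_abs, abs_exp, abs_exp]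
  calc exp (L x) * |g x| ≤ exp (L X - 2 * (x - X)) * (C * exp x) := by
        gcongr
        · exact hX X x le_rfl hxX
        · simpa [abs_of_nonneg hx0] using hC x
    _ = C * exp (L X + 2 * X) * exp (-x) := by linear_combination C * hexp

theorem integrable_exp_mul (hL : Continuous L) (htop : Tendsto (deriv L) atTop atBot)
    (hbot : Tendsto (deriv L) atBot atTop) (hg : SubexpGrowth g) (hgc : Continuous g) :
    Integrable fun x => exp (L x) * g x := by
  have hleft := (isBigO_exp_mul_atTop (L := fun x => L (-x)) (hL.comp continuous_neg)
    (tendsto_deriv_comp_neg hbot) hg.comp_neg).comp_tendsto tendsto_neg_atBot_atTop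
  simp only [Function.comp_def, neg_neg] at hleft
  exact (hL.rexp.mul hgc).locallyIntegrable.integrable_of_isBigO_atBot_atTop hleft
    ⟨Iic 0, Iic_mem_atBot 0, integrableOn_exp_Iic 0⟩ (isBigO_exp_mul_atTop hL htop hg)
    ⟨Ioi 0, Ioi_mem_atTop 0, integrableOn_exp_neg_Ioi 0⟩

theorem isBigO_exp_neg_mul_integral_Ioi (hL : Continuous L) (h : Tendsto (deriv L) atTop atBot)
    (hg : SubexpGrowth g) {s : ℝ} (hs : 0 < s) :
    (fun x => exp (-L x) * ∫ z in Ioi x, exp (L z) * g z) =O[atTop] fun x => exp (s * |x|) := by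
  obtain ⟨X, hX⟩ := exists_le_sub_mul_of_tendsto_deriv_atBot hL h (s + 1)
  obtain ⟨C, hC0, hC⟩ := hg.exists_bound hs
  refine IsBigO.of_bound C ?_
  filter_upwards [eventually_ge_atTop (max X 0)] with x hx
  have hxX : X ≤ x := le_of_max_le_left hx
  have hx0 : 0 ≤ x := le_of_max_le_right hx
  have hpt : ∀ z ∈ Ioi x,
      ‖exp (-L x) * (exp (L z) * g z)‖ ≤ C * exp ((s + 1) * x) * exp (-z) := fun z hz => by
    have hxz : x ≤ z := le_of_lt hz
    have hexp : exp (-((s + 1) * (z - x))) * exp (s * z) = exp ((s + 1) * x) * exp (-z) := by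
      rw [← exp_add, ← exp_add]; ring_nf
    rw [norm_mul, norm_mul, Real.norm_eq_abs, Real.norm_eq_abs, Real.norm_eq_abs, abs_exp,
      abs_exp, ← mul_assoc, ← exp_add, neg_add_eq_sub]
    calc exp (L z - L x) * |g z| ≤ exp (-((s + 1) * (z - x))) * (C * exp (s * z)) := by
          gcongr
          · linarith [hX x z hxX hxz]
          · simpa [abs_of_nonneg (hx0.trans hxz)] using hC z
      _ = C * exp ((s + 1) * x) * exp (-z) := by linear_combination C * hexp
  rw [← integral_const_mul]
  calc ‖∫ z in Ioi x, exp (-L x) * (exp (L z) * g z)‖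
      ≤ ∫ z in Ioi x, C * exp ((s + 1) * x) * exp (-z) :=
        norm_integral_le_of_norm_le ((integrableOn_exp_neg_Ioi x).const_mul _)
          ((ae_restrict_iff' measurableSet_Ioi).2 (Eventually.of_forall hpt))
    _ = C * ‖exp (s * |x|)‖ := by
        rw [integral_const_mul, integral_exp_neg_Ioi, norm_of_nonneg (exp_pos _).le,
          abs_of_nonneg hx0, mul_assoc, ← exp_add]
        ring_nf

theorem isBigO_exp_neg_mul_integral_Iic (hL : Continuous L) (h : Tendsto (deriv L) atBot atTop)
    (hg : SubexpGrowth g) {s : ℝ} (hs : 0 < s) :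
    (fun x => exp (-L x) * ∫ z in Iic x, exp (L z) * g z) =O[atBot] fun x => exp (s * |x|) := by
  have := (isBigO_exp_neg_mul_integral_Ioi (L := fun x => L (-x)) (hL.comp continuous_neg)
    (tendsto_deriv_comp_neg h) hg.comp_neg hs).comp_tendsto tendsto_neg_atBot_atTop
  have hreflect : ∀ x, ∫ z in Ioi (-x), exp (L (-z)) * g (-z) = ∫ z in Iic x, exp (L z) * g z :=
    fun x => by simpa only [neg_neg] using integral_comp_neg_Ioi (-x) fun z => exp (L z) * g z
  simpa only [Function.comp_def, neg_neg, abs_neg, hreflect] using this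

end Tails

theorem hasDerivAt_integral_Iic {E : Type*} [NormedAddCommGroup E] [NormedSpace ℝ E]
    [CompleteSpace E] {F : ℝ → E} (hF : Integrable F) (hc : Continuous F) (x : ℝ) :
    HasDerivAt (fun y => ∫ z in Iic y, F z) (F x) x := by
  have hsplit : (fun y => ∫ z in Iic y, F z) =
      fun y => (∫ z in Iic 0, F z) + ∫ z in (0 : ℝ)..y, F z := funext fun y => by
      rw [← intervalIntegral.integral_Iic_sub_Iic hF.integrableOn hF.integrableOn, add_sub_cancel]
  rw [hsplit]
  exact (hc.integral_hasStrictDerivAt 0 x).hasDerivAt.const_add _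

def weightedPrimitive (L g : ℝ → ℝ) (x : ℝ) : ℝ := exp (-L x) * ∫ z in Iic x, exp (L z) * g z

section WeightedPrimitive

variable {L g : ℝ → ℝ}

theorem hasDerivAt_weightedPrimitive {x : ℝ} (hL : DifferentiableAt ℝ L x)
    (hint : Integrable fun z => exp (L z) * g z) (hc : Continuous fun z => exp (L z) * g z) :
    HasDerivAt (weightedPrimitive L g) (g x - deriv L x * weightedPrimitive L g x) x := by
  refine (hL.hasDerivAt.fun_neg.exp.mul (hasDerivAt_integral_Iic hint hc x)).congr_deriv ?_
  rw [weightedPrimitive, exp_neg]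
  field_simp
  ring

theorem continuous_weightedPrimitive (hL : Continuous L)
    (hint : Integrable fun z => exp (L z) * g z) (hc : Continuous fun z => exp (L z) * g z) :
    Continuous (weightedPrimitive L g) :=
  hL.neg.rexp.mul (continuous_iff_continuousAt.2 fun x =>
    (hasDerivAt_integral_Iic hint hc x).continuousAt)

theorem subexpGrowth_weightedPrimitive (hL : Continuous L) (htop : Tendsto (deriv L) atTop atBot)
    (hbot : Tendsto (deriv L) atBot atTop) (hg : SubexpGrowth g) (hgc : Continuous g)
    (hzero : ∫ z, exp (L z) * g z = 0) : SubexpGrowth (weightedPrimitive L g) := by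
  have hint := integrable_exp_mul hL htop hbot hg hgc
  have hright : weightedPrimitive L g = fun x => -(exp (-L x) * ∫ z in Ioi x, exp (L z) * g z) :=
    funext fun x => by
      have := intervalIntegral.integral_Iic_add_Ioi (b := x) hint.integrableOn hint.integrableOn
      rw [hzero] at this
      rw [weightedPrimitive, eq_neg_of_add_eq_zero_left this, mul_neg]
  refine .of_isBigO_cocompact (continuous_weightedPrimitive hL hint (by fun_prop)) fun s hs => ?_
  rw [cocompact_eq_atBot_atTop, isBigO_sup]
  refine ⟨isBigO_exp_neg_mul_integral_Iic hL hbot hg hs, ?_⟩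
  rw [hright]
  exact (isBigO_exp_neg_mul_integral_Ioi hL htop hg hs).neg_left

theorem memS_weightedPrimitive {n m : ℕ} (hL : MemS n L) (htop : Tendsto (deriv L) atTop atBot)
    (hbot : Tendsto (deriv L) atBot atTop) (hg : MemS m g) (hzero : ∫ z, exp (L z) * g z = 0) :
    MemS (min n (m + 1)) (weightedPrimitive L g) := by
  have hint := integrable_exp_mul hL.continuous htop hbot hg.subexpGrowth hg.continuous
  have hc : Continuous fun z => exp (L z) * g z := hL.continuous.rexp.mul hg.continuous
  suffices ∀ k ≤ min n (m + 1), MemS k (weightedPrimitive L g) from this _ le_rfl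
  intro k hk
  induction k with
  | zero =>
    exact memS_zero_iff.2 ⟨continuous_weightedPrimitive hL.continuous hint hc,
      subexpGrowth_weightedPrimitive hL.continuous htop hbot hg.subexpGrowth hg.continuous hzero⟩
  | succ k ih =>
    obtain ⟨hLd, -, hL'⟩ := memS_succ_iff.1 (hL.of_le (by omega : k + 1 ≤ n))
    have hderiv (x : ℝ) := hasDerivAt_weightedPrimitive (hLd x) hint hc
    refine memS_succ_iff.2 ⟨fun x => (hderiv x).differentiableAt, (ih (by omega)).subexpGrowth, ?_⟩
    rw [funext fun x => (hderiv x).deriv]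
    exact (hg.of_le (by omega)).sub (hL'.mul (ih (by omega)))

end WeightedPrimitive

theorem fhat_eq_integral_weightedPrimitive {ρ : ℝ → ℝ} (hpos : ∀ x, 0 < ρ x) (l : ℝ)
    (f : ℝ → ℝ) : fhat ρ l f = fun x => ∫ y in (0 : ℝ)..x,
      2 / hc ρ l * weightedPrimitive (fun x => log (ρ x)) (fun z => rhoE ρ f - f z) y := by
  have hρ (x : ℝ) : exp (log (ρ x)) = ρ x := exp_log (hpos x)
  funext x
  simp only [fhat, weightedPrimitive, exp_neg, hρ]
  congr 1
  funext y
  ring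

theorem stmt12_general (ρ : ℝ → ℝ) (hpos : ∀ x, 0 < ρ x)
    (hint : ∫ x, ρ x = 1) (htail : SuperExpTails ρ)
    (l : ℝ)
    (nρ nf : ℕ) (hlog : MemS nρ fun x => Real.log (ρ x))
    (f : ℝ → ℝ) (hf : MemS nf f) :
    MemS (min (nf + 2) (nρ + 1)) (fhat ρ l f) := by
  obtain ⟨htop, hbot⟩ := htail
  have hρ (x : ℝ) : exp (log (ρ x)) = ρ x := exp_log (hpos x)
  have hcentred : ∫ z, exp (log (ρ z)) * (rhoE ρ f - f z) = 0 := by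
    have hρint := integrable_exp_mul hlog.continuous htop hbot (.const 1) continuous_const
    have hfρint := integrable_exp_mul hlog.continuous htop hbot hf.subexpGrowth hf.continuous
    simp only [hρ, mul_one] at hρint hfρint ⊢
    simp only [mul_sub]
    rw [integral_sub (hρint.mul_const _) hfρint, integral_mul_const, hint, one_mul, rhoE]
    simp only [mul_comm (f _), sub_self]
  rw [fhat_eq_integral_weightedPrimitive hpos,
    show min (nf + 2) (nρ + 1) = min nρ (nf + 1) + 1 by omega]
  exact ((memS_const _ _).mul (memS_weightedPrimitive hlog htop hbot
    ((memS_const nf _).sub hf) hcentred)).intervalIntegral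

/-- **Proposition.** If `log ρ ∈ S^{n_ρ}` and `f ∈ S^{n_f}`, then
`f̂ ∈ S^{min(n_f+2, n_ρ+1)}`. -/
theorem stmt12 (ρ : ℝ → ℝ) (hmeas : Measurable ρ) (hpos : ∀ x, 0 < ρ x)
    (hint : ∫ x, ρ x = 1) (htail : SuperExpTails ρ)
    (l : ℝ) (hl : 0 < l)
    (nρ nf : ℕ) (hlog : MemS nρ fun x => Real.log (ρ x))
    (f : ℝ → ℝ) (hf : MemS nf f) :
    MemS (min (nf + 2) (nρ + 1)) (fhat ρ l f) :=
  stmt12_general ρ hpos hint htail l nρ nf hlog f hf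
end
end

section
/- There exists a constant C such that for all f ∈ S³, all d ∈ ℕ and all x = (x₁,…,x_d) ∈ ℝ^d: max{|G f(x₁)|, |G_d f(x)|} ≤ C·e^{|x₁|}·Σ_{i=1}^2 ‖f^{(i)}‖_{∞,1/2}. -/
open MeasureTheory ProbabilityTheory Filter Set

noncomputable section

open Real NNReal

/-!
Both generators are controlled by the growth bounds `|f'|, |f''|, |(log ρ)'| ≤ C e^{|t|/2}`;
for `G f` this is immediate. For `G_d f(x)`, the reflection `Y₁ ↦ 2x₁ - Y₁` preserves the law
of the proposal, so `G_d f(x)` is half the expectation of the symmetrized integrand. There the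
first-order terms `f'(x₁)(Y₁ - x₁)` cancel up to the difference of the two acceptance
probabilities, which is at most `|log ρ(Y₁) - log ρ(2x₁ - Y₁)|` because `t ↦ min 1 eᵗ` is
1-Lipschitz. Together with the Taylor remainders, the symmetrized integrand is
`O((Y₁ - x₁)² e^{|Y₁ - x₁|/2})`, whose expectation is `O(l²/d)` and absorbs the factor `d`.
-/

lemma abs_le_normIS_mul_exp {g : ℝ → ℝ} {s : ℝ}
    (hg : BddAbove (range fun x => exp (-(s * |x|)) * |g x|)) (x : ℝ) :
    |g x| ≤ normIS g s * exp (s * |x|) := by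
  have h : exp (-(s * |x|)) * |g x| ≤ normIS g s := le_ciSup hg x
  rwa [exp_neg, inv_mul_le_iff₀ (exp_pos _), mul_comm] at h

lemma MemS.abs_iteratedDeriv_le {n i : ℕ} {g : ℝ → ℝ} (hg : MemS n g) (hi : i ≤ n) (x : ℝ) :
    |iteratedDeriv i g x| ≤ normIS (iteratedDeriv i g) (1 / 2) * exp (|x| / 2) := by
  simpa [div_eq_inv_mul] using abs_le_normIS_mul_exp (hg.2 (1 / 2) (by norm_num) i hi) x

lemma nonneg_of_abs_le_mul_exp {g : ℝ → ℝ} {M : ℝ} (hg : ∀ t, |g t| ≤ M * exp (|t| / 2)) :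
    0 ≤ M :=
  nonneg_of_mul_nonneg_left ((abs_nonneg _).trans (hg 0)) (exp_pos _)

lemma abs_min_one_exp_sub_min_one_exp_le (a b : ℝ) :
    |min 1 (exp a) - min 1 (exp b)| ≤ |a - b| := by
  have hmin : ∀ t, min 1 (exp t) = exp (min t 0) := fun t => by
    rw [exp_monotone.map_min, exp_zero, min_comm]
  have hlip : ∀ u ∈ Iic (0 : ℝ), ∀ v ∈ Iic (0 : ℝ), ‖exp u - exp v‖ ≤ 1 * ‖u - v‖ :=
    fun u hu v hv => (convex_Iic 0).norm_image_sub_le_of_norm_deriv_le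
      (fun t _ => differentiableAt_exp) (fun t ht => by simpa using ht) hv hu
  calc |min 1 (exp a) - min 1 (exp b)| = ‖exp (min a 0) - exp (min b 0)‖ := by
        rw [hmin, hmin, Real.norm_eq_abs]
    _ ≤ |min a 0 - min b 0| := by simpa using hlip _ (min_le_right a 0) _ (min_le_right b 0)
    _ ≤ |a - b| := by simpa using abs_min_sub_min_le_max a 0 b 0

lemma abs_min_one_mul_sub_min_one_mul_le {p q Q : ℝ} (hp : 0 < p) (hq : 0 < q) (hQ : 0 < Q) :
    |min 1 (p * Q) - min 1 (q * Q)| ≤ |log p - log q| := by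
  have h := abs_min_one_exp_sub_min_one_exp_le (log p + log Q) (log q + log Q)
  rwa [exp_add, exp_add, exp_log hp, exp_log hq, exp_log hQ, add_sub_add_right_eq_sub] at h

lemma exp_abs_half_le_of_mem_closedBall {x δ t : ℝ} (ht : t ∈ Metric.closedBall x δ) :
    exp (|t| / 2) ≤ exp (|x| / 2) * exp (δ / 2) := by
  rw [← exp_add, exp_le_exp]
  have := abs_sub_abs_le_abs_sub t x
  rw [Metric.mem_closedBall, Real.dist_eq] at ht
  linarith

lemma abs_sub_le_of_abs_deriv_le {g : ℝ → ℝ} (hg : Differentiable ℝ g) {M : ℝ}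
    (hg' : ∀ t, |deriv g t| ≤ M * exp (|t| / 2)) {x δ u v : ℝ}
    (hu : u ∈ Metric.closedBall x δ) (hv : v ∈ Metric.closedBall x δ) :
    |g u - g v| ≤ M * exp (|x| / 2) * exp (δ / 2) * |u - v| := by
  have hM := nonneg_of_abs_le_mul_exp hg'
  have bound : ∀ t ∈ Metric.closedBall x δ, ‖deriv g t‖ ≤ M * exp (|x| / 2) * exp (δ / 2) :=
    fun t ht => (hg' t).trans <| by
      rw [mul_assoc]; exact mul_le_mul_of_nonneg_left (exp_abs_half_le_of_mem_closedBall ht) hM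
  exact (convex_closedBall x δ).norm_image_sub_le_of_norm_deriv_le (fun t _ => hg t) bound hv hu

lemma abs_sub_sub_deriv_mul_le {f : ℝ → ℝ} (hf : ContDiff ℝ 2 f) {M : ℝ}
    (hf'' : ∀ t, |deriv (deriv f) t| ≤ M * exp (|t| / 2)) (x z : ℝ) :
    |f z - f x - deriv f x * (z - x)| ≤ M * exp (|x| / 2) * ((z - x) ^ 2 * exp (|z - x| / 2)) := by
  have hf' : Differentiable ℝ (deriv f) :=
    ((contDiff_succ_iff_deriv (n := 1)).mp hf).2.2.differentiable one_ne_zero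
  have hM := nonneg_of_abs_le_mul_exp hf''
  set δ := |z - x|
  have hz : z ∈ Metric.closedBall x δ := by simp [δ, Real.dist_eq]
  have hx : x ∈ Metric.closedBall x δ := Metric.mem_closedBall_self (abs_nonneg _)
  have hderiv : ∀ t ∈ Metric.closedBall x δ,
      HasDerivWithinAt (fun u => f u - f x - deriv f x * (u - x)) (deriv f t - deriv f x)
        (Metric.closedBall x δ) t := fun t _ =>
    ((((hf.differentiable (by norm_num)) t).hasDerivAt.sub_const (f x)).sub
      (((hasDerivAt_id t).sub_const x).const_mul (deriv f x)) |>.congr_deriv (by simp))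
      |>.hasDerivWithinAt
  have bound : ∀ t ∈ Metric.closedBall x δ,
      ‖deriv f t - deriv f x‖ ≤ M * exp (|x| / 2) * exp (δ / 2) * δ := fun t ht =>
    (abs_sub_le_of_abs_deriv_le hf' hf'' ht hx).trans <|
      mul_le_mul_of_nonneg_left (by simpa [Real.dist_eq] using ht) (by positivity)
  have h := (convex_closedBall x δ).norm_image_sub_le_of_norm_hasDerivWithin_le hderiv bound hx hz
  simp only [sub_self, mul_zero, sub_zero, Real.norm_eq_abs] at h
  calc _ ≤ M * exp (|x| / 2) * exp (δ / 2) * δ * |z - x| := h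
    _ = _ := by rw [← sq_abs (z - x)]; ring

lemma abs_integral_le_of_abs_add_comp_le {α : Type*} [MeasurableSpace α] {μ : Measure α}
    {T : α → α} (hT : MeasurePreserving T μ μ) {F g : α → ℝ} (hF : Integrable F μ)
    (hg : Integrable g μ) (hFg : ∀ y, |F y + F (T y)| ≤ 2 * g y) :
    |∫ y, F y ∂μ| ≤ ∫ y, g y ∂μ := by
  have hFT : Integrable (fun y => F (T y)) μ := (hT.integrable_comp hF.aestronglyMeasurable).2 hF
  have hsym : ∫ y, F (T y) ∂μ = ∫ y, F y ∂μ := by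
    rw [← integral_map hT.aemeasurable (by rw [hT.map_eq]; exact hF.aestronglyMeasurable),
      hT.map_eq]
  have h : 2 * |∫ y, F y ∂μ| ≤ 2 * ∫ y, g y ∂μ :=
    calc 2 * |∫ y, F y ∂μ| = |∫ y, (F y + F (T y)) ∂μ| := by
          rw [integral_add hF hFT, hsym, ← two_mul, abs_mul, abs_two]
      _ ≤ ∫ y, |F y + F (T y)| ∂μ := abs_integral_le_integral_abs
      _ ≤ ∫ y, 2 * g y ∂μ := integral_mono (hF.add hFT).abs (hg.const_mul 2) hFg
      _ = 2 * ∫ y, g y ∂μ := integral_const_mul 2 _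
  linarith

lemma measurePreserving_update_pi {ι α : Type*} [Fintype ι] [DecidableEq ι] [MeasurableSpace α]
    {μ : ι → Measure α} [∀ i, SigmaFinite (μ i)] {i : ι} {g : α → α}
    (hg : MeasurePreserving g (μ i) (μ i)) :
    MeasurePreserving (fun y => Function.update y i (g (y i))) (Measure.pi μ) (Measure.pi μ) := by
  convert measurePreserving_pi μ μ (f := fun j => if j = i then g else id) fun j => ?_ using 1
  · funext y j
    by_cases h : j = i
    · subst h; simp
    · simp [h]
  · by_cases h : j = i
    · subst h; simpa using hg
    · simpa [h] using MeasurePreserving.id (μ j)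

lemma measurePreserving_gaussianReal_reflect (m : ℝ) (v : ℝ≥0) :
    MeasurePreserving (fun z => 2 * m - z) (gaussianReal m v) (gaussianReal m v) :=
  ⟨by fun_prop, by rw [gaussianReal_map_const_sub]; ring_nf⟩

instance (l : ℝ) (d : ℕ) (x : Fin d → ℝ) : IsProbabilityMeasure (gaussPi l d x) := by
  unfold gaussPi; infer_instance

lemma measurePreserving_gaussPi_sub (l : ℝ) {d : ℕ} (x : Fin d → ℝ) (i : Fin d) :
    MeasurePreserving (fun y => y i - x i) (gaussPi l d x)
      (gaussianReal 0 (l ^ 2 / (d : ℝ)).toNNReal) := by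
  have hsub : MeasurePreserving (· - x i) (gaussianReal (x i) (l ^ 2 / (d : ℝ)).toNNReal)
      (gaussianReal 0 (l ^ 2 / (d : ℝ)).toNNReal) :=
    ⟨by fun_prop, by rw [gaussianReal_map_sub_const, sub_self]⟩
  exact hsub.comp (measurePreserving_eval _ i)

lemma integrable_exp_mul_abs_gaussianReal (m : ℝ) (v : ℝ≥0) (a : ℝ) :
    Integrable (fun z => exp (a * |z|)) (gaussianReal m v) := by
  refine ((integrable_exp_mul_gaussianReal a).add (integrable_exp_mul_gaussianReal (-a))).mono'
    (by fun_prop) (ae_of_all _ fun z => ?_)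
  rw [Real.norm_of_nonneg (exp_pos _).le, Pi.add_apply]
  rcases abs_choice z with h | h <;> rw [h]
  · linarith [exp_pos (-a * z)]
  · rw [mul_neg, ← neg_mul]; linarith [exp_pos (a * z)]

lemma integrable_sq_mul_exp_mul_abs_gaussianReal (m : ℝ) (v : ℝ≥0) (a : ℝ) :
    Integrable (fun z => z ^ 2 * exp (a * |z|)) (gaussianReal m v) := by
  refine ((integrable_exp_mul_abs_gaussianReal m v (a + 1)).const_mul 2).mono'
    (by fun_prop) (ae_of_all _ fun z => ?_)
  have hsq : z ^ 2 ≤ 2 * exp |z| := by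
    have := quadratic_le_exp_of_nonneg (abs_nonneg z)
    rw [sq_abs] at this
    linarith [abs_nonneg z]
  rw [Real.norm_of_nonneg (by positivity), add_one_mul, exp_add, mul_comm (exp _), ← mul_assoc]
  exact mul_le_mul_of_nonneg_right hsq (exp_pos _).le

def gaussMoment (a : ℝ) : ℝ := ∫ z, z ^ 2 * exp (a * |z|) ∂(gaussianReal 0 1)

lemma gaussMoment_nonneg (a : ℝ) : 0 ≤ gaussMoment a :=
  integral_nonneg fun z => by positivity

lemma integral_sq_mul_exp_abs_half_le {v : ℝ≥0} {L : ℝ} (hL : √(v : ℝ) ≤ L) :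
    ∫ z, z ^ 2 * exp (|z| / 2) ∂(gaussianReal 0 v) ≤ v * gaussMoment (L / 2) := by
  set c := √(v : ℝ)
  have hc : 0 ≤ c := sqrt_nonneg _
  have hc2 : c ^ 2 = v := sq_sqrt v.2
  have hscale : (gaussianReal 0 1).map (c * ·) = gaussianReal 0 v := by
    rw [gaussianReal_map_const_mul, mul_zero, mul_one]
    congr 1
    ext
    simp [c]
  have hpt : ∀ z : ℝ, (c * z) ^ 2 * exp (|c * z| / 2) ≤ v * (z ^ 2 * exp (L / 2 * |z|)) := by
    intro z
    rw [abs_mul, abs_of_nonneg hc, mul_pow, hc2, mul_assoc]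
    gcongr
    linarith [abs_nonneg z, mul_le_mul_of_nonneg_right hL (abs_nonneg z)]
  rw [← hscale, integral_map (by fun_prop) (by fun_prop), gaussMoment, ← integral_const_mul]
  exact integral_mono_of_nonneg (ae_of_all _ fun z => by positivity)
    ((integrable_sq_mul_exp_mul_abs_gaussianReal 0 1 _).const_mul _) (ae_of_all _ hpt)

lemma integral_gaussPi_sq_mul_exp_abs_half_le (l : ℝ) (d : ℕ) [NeZero d] (x : Fin d → ℝ)
    (i : Fin d) : (d : ℝ) * ∫ y, (y i - x i) ^ 2 * exp (|y i - x i| / 2) ∂(gaussPi l d x)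
      ≤ l ^ 2 * gaussMoment (|l| / 2) := by
  have hd : (1 : ℝ) ≤ d := Nat.one_le_cast.2 (Nat.pos_of_neZero d)
  have hv : ((l ^ 2 / (d : ℝ)).toNNReal : ℝ) = l ^ 2 / d := Real.coe_toNNReal _ (by positivity)
  have hvl : √(((l ^ 2 / (d : ℝ)).toNNReal : ℝ)) ≤ |l| := by
    rw [hv, ← sqrt_sq_eq_abs]
    exact sqrt_le_sqrt (div_le_self (sq_nonneg l) hd)
  rw [← integral_map (f := fun z => z ^ 2 * exp (|z| / 2))
    (measurePreserving_gaussPi_sub l x i).aemeasurable (by fun_prop),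
    (measurePreserving_gaussPi_sub l x i).map_eq]
  calc (d : ℝ) * ∫ z, z ^ 2 * exp (|z| / 2) ∂(gaussianReal 0 (l ^ 2 / (d : ℝ)).toNNReal)
      ≤ d * ((l ^ 2 / (d : ℝ)).toNNReal * gaussMoment (|l| / 2)) :=
        mul_le_mul_of_nonneg_left (integral_sq_mul_exp_abs_half_le hvl) (by positivity)
    _ = l ^ 2 * gaussMoment (|l| / 2) := by rw [hv]; field_simp

lemma abs_min_one_prod_div_sub_update_le {ι : Type*} [Fintype ι] [DecidableEq ι] {ρ : ℝ → ℝ}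
    (hpos : ∀ x, 0 < ρ x) (x y : ι → ℝ) (i : ι) (a : ℝ) :
    |min 1 ((∏ j, ρ (y j)) / ∏ j, ρ (x j))
        - min 1 ((∏ j, ρ (Function.update y i a j)) / ∏ j, ρ (x j))|
      ≤ |log (ρ (y i)) - log (ρ a)| := by
  have hQ : 0 < (∏ j ∈ Finset.univ.erase i, ρ (y j)) / ∏ j, ρ (x j) :=
    div_pos (Finset.prod_pos fun j _ => hpos _) (Finset.prod_pos fun j _ => hpos _)
  have hprod : ∀ w : ι → ℝ, ∏ j, ρ (w j) = ρ (w i) * ∏ j ∈ Finset.univ.erase i, ρ (w j) :=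
    fun w => (Finset.mul_prod_erase _ _ (Finset.mem_univ i)).symm
  have hrest : ∏ j ∈ Finset.univ.erase i, ρ (Function.update y i a j)
      = ∏ j ∈ Finset.univ.erase i, ρ (y j) :=
    Finset.prod_congr rfl fun j hj => by rw [Function.update_of_ne (Finset.ne_of_mem_erase hj)]
  rw [hprod y, hprod (Function.update y i a), hrest, Function.update_self, mul_div_assoc,
    mul_div_assoc]
  exact abs_min_one_mul_sub_min_one_mul_le (hpos _) (hpos _) hQ

lemma abs_add_reflect_le {f g : ℝ → ℝ} (hf : ContDiff ℝ 2 f) {M : ℝ}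
    (hf'' : ∀ t, |deriv (deriv f) t| ≤ M * exp (|t| / 2)) (hg : Differentiable ℝ g) {B : ℝ}
    (hg' : ∀ t, |deriv g t| ≤ B * exp (|t| / 2)) {x z m m' : ℝ} (hm : |m| ≤ 1) (hm' : |m'| ≤ 1)
    (hmm' : |m - m'| ≤ |g z - g (2 * x - z)|) :
    |(f z - f x) * m + (f (2 * x - z) - f x) * m'|
      ≤ 2 * ((|deriv f x| * B + M) * exp (|x| / 2) * ((z - x) ^ 2 * exp (|z - x| / 2))) := by
  set c := deriv f x
  set ψ := (z - x) ^ 2 * exp (|z - x| / 2) with hψdef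
  have hR := abs_sub_sub_deriv_mul_le hf hf'' x z
  have hR' := abs_sub_sub_deriv_mul_le hf hf'' x (2 * x - z)
  rw [show 2 * x - z - x = -(z - x) by ring, neg_sq, abs_neg] at hR'
  have hzx : z ∈ Metric.closedBall x |z - x| := by simp [Real.dist_eq]
  have hzx' : 2 * x - z ∈ Metric.closedBall x |z - x| := by
    rw [Metric.mem_closedBall, Real.dist_eq, show 2 * x - z - x = -(z - x) by ring, abs_neg]
  have hG := abs_sub_le_of_abs_deriv_le hg hg' hzx hzx'
  rw [show z - (2 * x - z) = 2 * (z - x) by ring, abs_mul, abs_two] at hG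
  have hcm : |c * (z - x) * (m - m')| ≤ 2 * (|c| * B * exp (|x| / 2) * ψ) := by
    rw [abs_mul, abs_mul]
    calc |c| * |z - x| * |m - m'|
        ≤ |c| * |z - x| * (B * exp (|x| / 2) * exp (|z - x| / 2) * (2 * |z - x|)) := by
          gcongr; exact hmm'.trans hG
      _ = 2 * (|c| * B * exp (|x| / 2) * ψ) := by rw [hψdef, ← sq_abs (z - x)]; ring
  have hRm : |(f z - f x - c * (z - x)) * m| ≤ M * exp (|x| / 2) * ψ := by
    rw [abs_mul]; exact (mul_le_of_le_one_right (abs_nonneg _) hm).trans hR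
  have hRm' : |(f (2 * x - z) - f x - c * -(z - x)) * m'| ≤ M * exp (|x| / 2) * ψ := by
    rw [abs_mul]; exact (mul_le_of_le_one_right (abs_nonneg _) hm').trans hR'
  calc |(f z - f x) * m + (f (2 * x - z) - f x) * m'|
      = |c * (z - x) * (m - m') + (f z - f x - c * (z - x)) * m
          + (f (2 * x - z) - f x - c * -(z - x)) * m'| := by ring_nf
    _ ≤ 2 * (|c| * B * exp (|x| / 2) * ψ) + M * exp (|x| / 2) * ψ + M * exp (|x| / 2) * ψ :=
        (abs_add_le _ _).trans (add_le_add ((abs_add_le _ _).trans (add_le_add hcm hRm)) hRm')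
    _ = _ := by ring

lemma integrable_gaussPi_sq_mul_exp_abs_half (l : ℝ) {d : ℕ} (x : Fin d → ℝ) (i : Fin d) :
    Integrable (fun y => (y i - x i) ^ 2 * exp (|y i - x i| / 2)) (gaussPi l d x) :=
  ((measurePreserving_gaussPi_sub l x i).integrable_comp
    (g := fun z => z ^ 2 * exp (|z| / 2)) (by fun_prop)).2
    (by simpa only [div_eq_inv_mul] using integrable_sq_mul_exp_mul_abs_gaussianReal 0 _ 2⁻¹)

lemma integrable_gaussPi_sub {f : ℝ → ℝ} (hf : ContDiff ℝ 2 f) {M : ℝ}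
    (hf'' : ∀ t, |deriv (deriv f) t| ≤ M * exp (|t| / 2)) (l : ℝ) {d : ℕ} (x : Fin d → ℝ)
    (i : Fin d) : Integrable (fun y => f (y i) - f (x i)) (gaussPi l d x) := by
  set c := deriv f (x i)
  set ψ : (Fin d → ℝ) → ℝ := fun y => (y i - x i) ^ 2 * exp (|y i - x i| / 2)
  refine ((integrable_const |c|).add ((integrable_gaussPi_sq_mul_exp_abs_half l x i).const_mul
    (|c| + M * exp (|x i| / 2)))).mono'
    ((hf.continuous.comp (continuous_apply i)).sub continuous_const).aestronglyMeasurable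
    (ae_of_all _ fun y => ?_)
  have hR := abs_sub_sub_deriv_mul_le hf hf'' (x i) (y i)
  have hlin : |y i - x i| ≤ 1 + ψ y := by
    have : (y i - x i) ^ 2 ≤ ψ y :=
      le_mul_of_one_le_right (sq_nonneg _) (one_le_exp (by positivity))
    nlinarith [abs_nonneg (y i - x i), sq_abs (y i - x i)]
  calc ‖f (y i) - f (x i)‖ ≤ |c| * |y i - x i| + M * exp (|x i| / 2) * ψ y := by
        rw [Real.norm_eq_abs, ← abs_mul]
        linarith [abs_sub_abs_le_abs_sub (f (y i) - f (x i)) (c * (y i - x i))]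
    _ ≤ _ := by
        simp only [Pi.add_apply]
        nlinarith [mul_le_mul_of_nonneg_left hlin (abs_nonneg c)]

lemma abs_Gop_le {ρ : ℝ → ℝ} {B : ℝ} (hdl : ∀ t, |dl ρ t| ≤ B * exp (|t| / 2)) {f : ℝ → ℝ}
    {M : ℝ} (hf'' : ∀ t, |deriv (deriv f) t| ≤ M * exp (|t| / 2)) (l t : ℝ) :
    |Gop ρ l f t| ≤ |hc ρ l| / 2 * ((|deriv f t| * B + M) * exp (|t| / 2)) := by
  rw [Gop, abs_mul, abs_div, abs_two]
  gcongr
  calc |deriv (deriv f) t + dl ρ t * deriv f t|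
      ≤ |deriv (deriv f) t| + |dl ρ t| * |deriv f t| := (abs_add_le _ _).trans_eq (by rw [abs_mul])
    _ ≤ M * exp (|t| / 2) + B * exp (|t| / 2) * |deriv f t| := by gcongr; exacts [hf'' t, hdl t]
    _ = (|deriv f t| * B + M) * exp (|t| / 2) := by ring

lemma mul_add_mul_exp_half_le {a B M₁ M₂ t : ℝ} (ha : a ≤ M₁ * exp (|t| / 2)) (hB : 0 ≤ B)
    (hM₁ : 0 ≤ M₁) (hM₂ : 0 ≤ M₂) :
    (a * B + M₂) * exp (|t| / 2) ≤ (1 + B) * (M₁ + M₂) * exp |t| := by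
  have hE : exp (|t| / 2) * exp (|t| / 2) = exp |t| := by rw [← exp_add, add_halves]
  have hE' : exp (|t| / 2) ≤ exp |t| := exp_le_exp.2 (by linarith [abs_nonneg t])
  have : 0 ≤ (M₁ + B * M₂) * exp |t| := by positivity
  calc (a * B + M₂) * exp (|t| / 2) ≤ (M₁ * exp (|t| / 2) * B + M₂) * exp (|t| / 2) := by gcongr
    _ = B * M₁ * exp |t| + M₂ * exp (|t| / 2) := by rw [← hE]; ring
    _ ≤ (1 + B) * (M₁ + M₂) * exp |t| := by
        nlinarith [mul_le_mul_of_nonneg_left hE' hM₂]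

theorem abs_Gd_le {ρ : ℝ → ℝ} (hmeas : Measurable ρ) (hpos : ∀ x, 0 < ρ x)
    (hlog : Differentiable ℝ fun t => log (ρ t)) {B : ℝ}
    (hdl : ∀ t, |dl ρ t| ≤ B * exp (|t| / 2)) {f : ℝ → ℝ} (hf : ContDiff ℝ 2 f) {M : ℝ}
    (hf'' : ∀ t, |deriv (deriv f) t| ≤ M * exp (|t| / 2)) (l : ℝ) (d : ℕ) [NeZero d]
    (x : Fin d → ℝ) :
    |Gd ρ l d f x|
      ≤ (|deriv f (x 0)| * B + M) * exp (|x 0| / 2) * (l ^ 2 * gaussMoment (|l| / 2)) := by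
  set K := (|deriv f (x 0)| * B + M) * exp (|x 0| / 2)
  have hK : 0 ≤ K := by
    have := nonneg_of_abs_le_mul_exp hdl
    have := nonneg_of_abs_le_mul_exp hf''
    positivity
  let m : (Fin d → ℝ) → ℝ := fun y => min 1 ((∏ i, ρ (y i)) / ∏ i, ρ (x i))
  let F : (Fin d → ℝ) → ℝ := fun y => (f (y 0) - f (x 0)) * m y
  let ψ : (Fin d → ℝ) → ℝ := fun y => (y 0 - x 0) ^ 2 * exp (|y 0 - x 0| / 2)
  have hm : ∀ y, |m y| ≤ 1 := fun y => abs_le.2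
    ⟨neg_one_lt_zero.le.trans <| le_min zero_le_one <| div_nonneg
      (Finset.prod_nonneg fun i _ => (hpos _).le) (Finset.prod_nonneg fun i _ => (hpos _).le),
    min_le_left _ _⟩
  have hψ : Integrable ψ (gaussPi l d x) := integrable_gaussPi_sq_mul_exp_abs_half l x 0
  have hsym : ∀ y, |F y + F (Function.update y 0 (2 * x 0 - y 0))| ≤ 2 * (K * ψ y) := by
    intro y
    simpa only [F, Function.update_self] using abs_add_reflect_le hf hf'' hlog hdl (hm y) (hm _)
      (abs_min_one_prod_div_sub_update_le hpos x y 0 (2 * x 0 - y 0))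
  have hF : Integrable F (gaussPi l d x) :=
    (integrable_gaussPi_sub hf hf'' l x 0).mul_bdd
      (show Measurable m by unfold m; fun_prop).aestronglyMeasurable (ae_of_all _ hm)
  have hT := measurePreserving_update_pi (μ := fun i => gaussianReal (x i) _) (i := 0)
    (measurePreserving_gaussianReal_reflect (x 0) (l ^ 2 / (d : ℝ)).toNNReal)
  calc |Gd ρ l d f x| = d * |∫ y, F y ∂(gaussPi l d x)| := by
        rw [Gd, abs_mul, Nat.abs_cast]
    _ ≤ d * ∫ y, K * ψ y ∂(gaussPi l d x) := by
        gcongr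
        exact abs_integral_le_of_abs_add_comp_le hT hF (hψ.const_mul K) hsym
    _ = K * ((d : ℝ) * ∫ y, ψ y ∂(gaussPi l d x)) := by rw [integral_const_mul]; ring
    _ ≤ K * (l ^ 2 * gaussMoment (|l| / 2)) :=
        mul_le_mul_of_nonneg_left (integral_gaussPi_sq_mul_exp_abs_half_le l d x 0) hK

theorem stmt13_general (ρ : ℝ → ℝ) (hmeas : Measurable ρ) (hpos : ∀ x, 0 < ρ x)
    (hlog : MemS 4 fun x => Real.log (ρ x)) (l : ℝ) :
    ∃ C : ℝ, ∀ f : ℝ → ℝ, MemS 3 f → ∀ (d : ℕ) [NeZero d], ∀ x : Fin d → ℝ,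
      max |Gop ρ l f (x 0)| |Gd ρ l d f x| ≤
        C * Real.exp |x 0| * ∑ i ∈ Finset.Icc 1 2, normIS (iteratedDeriv i f) (1/2) := by
  set B := normIS (iteratedDeriv 1 fun x => log (ρ x)) (1 / 2)
  have hdl : ∀ t, |dl ρ t| ≤ B * exp (|t| / 2) := fun t => by
    rw [dl, ← iteratedDeriv_one]; exact hlog.abs_iteratedDeriv_le (by norm_num) t
  set K₁ := |hc ρ l| / 2
  set K₂ := l ^ 2 * gaussMoment (|l| / 2)
  have hK₂ : 0 ≤ K₂ := mul_nonneg (sq_nonneg l) (gaussMoment_nonneg _)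
  refine ⟨(1 + B) * (K₁ + K₂), fun f hf d _ x => ?_⟩
  set M₁ := normIS (iteratedDeriv 1 f) (1 / 2)
  set M₂ := normIS (iteratedDeriv 2 f) (1 / 2)
  have hf' : ∀ t, |deriv f t| ≤ M₁ * exp (|t| / 2) := fun t => by
    rw [← iteratedDeriv_one]; exact hf.abs_iteratedDeriv_le (by norm_num) t
  have hf'' : ∀ t, |deriv (deriv f) t| ≤ M₂ * exp (|t| / 2) := fun t => by
    rw [← iteratedDeriv_one, ← iteratedDeriv_succ']; exact hf.abs_iteratedDeriv_le (by norm_num) t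
  set R := (1 + B) * (M₁ + M₂) * exp |x 0|
  have hB := nonneg_of_abs_le_mul_exp hdl
  have hM₁ := nonneg_of_abs_le_mul_exp hf'
  have hM₂ := nonneg_of_abs_le_mul_exp hf''
  have hQR := mul_add_mul_exp_half_le (hf' (x 0)) hB hM₁ hM₂
  have hR : 0 ≤ R := mul_nonneg (mul_nonneg (by linarith) (by linarith)) (exp_pos _).le
  have hGop : |Gop ρ l f (x 0)| ≤ K₁ * R :=
    (abs_Gop_le hdl hf'' l (x 0)).trans (mul_le_mul_of_nonneg_left hQR (by positivity))
  have hGd : |Gd ρ l d f x| ≤ R * K₂ :=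
    (abs_Gd_le hmeas hpos (hlog.1.differentiable (by norm_num)) hdl (hf.1.of_le (by norm_num))
      hf'' l d x).trans (mul_le_mul_of_nonneg_right hQR hK₂)
  rw [show ∑ i ∈ Finset.Icc 1 2, normIS (iteratedDeriv i f) (1 / 2) = M₁ + M₂ by
      rw [show Finset.Icc 1 2 = {1, 2} from rfl, Finset.sum_pair (by norm_num)],
    show (1 + B) * (K₁ + K₂) * exp |x 0| * (M₁ + M₂) = K₁ * R + R * K₂ by ring]
  exact max_le (hGop.trans (le_add_of_nonneg_right (mul_nonneg hR hK₂)))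
    (hGd.trans (le_add_of_nonneg_left (mul_nonneg (by positivity) hR)))

/-- **Lemma.** There is a constant `C` with
`max{|G f(x₁)|, |G_d f(x)|} ≤ C e^{|x₁|} Σ_{i=1}^2 ‖f⁽ⁱ⁾‖_{∞,1/2}` for all `f ∈ S³`,
all `d ∈ ℕ` and all `x ∈ ℝ^d`. -/
theorem stmt13 (ρ : ℝ → ℝ) (hmeas : Measurable ρ) (hpos : ∀ x, 0 < ρ x)
    (hint : ∫ x, ρ x = 1) (hlog : MemS 4 fun x => Real.log (ρ x))
    (htail : SuperExpTails ρ) (l : ℝ) (hl : 0 < l) :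
    ∃ C : ℝ, ∀ f : ℝ → ℝ, MemS 3 f → ∀ (d : ℕ) [NeZero d], ∀ x : Fin d → ℝ,
      max |Gop ρ l f (x 0)| |Gd ρ l d f x| ≤
        C * Real.exp |x 0| * ∑ i ∈ Finset.Icc 1 2, normIS (iteratedDeriv i f) (1/2) :=
  stmt13_general ρ hmeas hpos hlog l
end
end

section
/- Let X be a real random variable with finite mean μ, variance σ² > 0, and finite absolute third central moment κ := E[|X−μ|³]. Then for all t with |t| ≤ 1/σ, the characteristic function φ_X of X satisfies |Log(e^{−iμt}·φ_X(t)) + (σ²/2)t²| ≤ κ|t|³/6 + σ⁴t⁴/4, where Log denotes the principal branch of the complex logarithm (equivalently, |log φ_X(t) − (iμt − σ²t²/2)| ≤ κ|t|³/6 + σ⁴t⁴/4 with log φ_X(t) := iμt + Log(e^{−iμt}φ_X(t))). -/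
open MeasureTheory Filter Set

noncomputable section

/-- the characteristic function of a law `μ` on `ℝ` -/
def charF (μ : Measure ℝ) (t : ℝ) : ℂ := ∫ x, Complex.exp (t * x * Complex.I) ∂μ

/-!
With `Y = X - m`, the centred characteristic function is `ψ(t) = E[exp(i t Y)]`. The Taylor
remainders of `θ ↦ exp(iθ)` satisfy `|exp(iθ) - ∑_{k<n} (iθ)^k/k!| ≤ |θ|^n/n!`, so integrating
them against the law of `tY` gives `|ψ(t) - 1| ≤ σ²t²/2` and `|ψ(t) - 1 + σ²t²/2| ≤ κ|t|³/6`.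
For `|t| ≤ 1/σ` the first bound is at most `1/2`, where `|Log(1 + z) - z| ≤ |z|²`; writing
`Log ψ = (Log ψ - (ψ - 1)) + (ψ - 1)` then yields the claim.
-/

open Complex

def expIRemainder (n : ℕ) (θ : ℝ) : ℂ :=
  exp (θ * I) - ∑ k ∈ Finset.range n, (θ * I) ^ k / k.factorial

lemma hasDerivAt_ofReal_mul_I_pow_succ_div (n : ℕ) (s : ℝ) :
    HasDerivAt (fun θ : ℝ => ((θ : ℂ) * I) ^ (n + 1) / (n + 1).factorial)
      (I * ((s * I) ^ n / n.factorial)) s := by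
  have h : HasDerivAt (fun θ : ℝ => ((θ : ℂ) * I) ^ (n + 1) / (n + 1).factorial)
      ((n + 1 : ℕ) * ((s : ℂ) * I) ^ n * I / (n + 1).factorial) s := by
    simpa using (((hasDerivAt_id (s : ℂ)).mul_const I).pow (n + 1)).comp_ofReal.div_const
      ((n + 1).factorial : ℂ)
  refine h.congr_deriv ?_
  rw [Nat.factorial_succ]
  push_cast
  field_simp

lemma hasDerivAt_expIRemainder_succ (n : ℕ) (s : ℝ) :
    HasDerivAt (expIRemainder (n + 1)) (I * expIRemainder n s) s := by
  induction n with
  | zero =>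
    have h : expIRemainder 1 = fun θ : ℝ => exp (θ * I) - 1 := by
      funext θ
      simp [expIRemainder]
    rw [h]
    simpa [expIRemainder, mul_comm I] using
      ((((hasDerivAt_id (s : ℂ)).mul_const I).cexp).comp_ofReal).sub_const 1
  | succ n ih =>
    have h : expIRemainder (n + 2) =
        fun θ : ℝ => expIRemainder (n + 1) θ - ((θ : ℂ) * I) ^ (n + 1) / (n + 1).factorial := by
      funext θ
      simp only [expIRemainder, Finset.sum_range_succ _ (n + 1), sub_sub]
    rw [h]
    refine (ih.sub (hasDerivAt_ofReal_mul_I_pow_succ_div n s)).congr_deriv ?_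
    simp only [expIRemainder, Finset.sum_range_succ]
    ring

lemma norm_expIRemainder_le (n : ℕ) (θ : ℝ) :
    ‖expIRemainder n θ‖ ≤ |θ| ^ n / n.factorial := by
  induction n generalizing θ with
  | zero => simp [expIRemainder, norm_exp_ofReal_mul_I]
  | succ n ih =>
    -- write `θ = ε |θ|` and run the fence argument along `s ↦ ε s` on `[0, |θ|]`
    obtain ⟨ε, hε, hθ⟩ : ∃ ε : ℝ, |ε| = 1 ∧ θ = ε * |θ| := by
      rcases le_total 0 θ with h | h
      · exact ⟨1, by simp, by simp [abs_of_nonneg h]⟩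
      · exact ⟨-1, by simp, by simp [abs_of_nonpos h]⟩
    have hderiv : ∀ s, HasDerivAt (fun s => expIRemainder (n + 1) (ε * s))
        (ε * (I * expIRemainder n (ε * s))) s := fun s => by
      have h := (hasDerivAt_expIRemainder_succ n (ε * s)).scomp s
        ((hasDerivAt_id s).const_mul ε)
      simp only [mul_one, real_smul] at h
      exact h
    have hB : ∀ s : ℝ, HasDerivAt (fun s : ℝ => s ^ (n + 1) / (n + 1).factorial)
        (s ^ n / n.factorial) s := fun s => by
      refine ((hasDerivAt_pow (n + 1) s).div_const _).congr_deriv ?_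
      rw [Nat.factorial_succ]
      push_cast
      field_simp
    have key := image_norm_le_of_norm_deriv_right_le_deriv_boundary (a := 0) (b := |θ|)
      (fun s _ => (hderiv s).continuousAt.continuousWithinAt)
      (fun s _ => (hderiv s).hasDerivWithinAt)
      (by simp [expIRemainder, Finset.sum_range_succ']) hB
      (fun s hs => by
        simpa [norm_mul, hε, abs_mul, abs_of_nonneg hs.1] using ih (ε * s))
      (right_mem_Icc.2 (abs_nonneg θ))
    rwa [← hθ] at key

section Moments

variable {Ω : Type*} [MeasurableSpace Ω] {P : Measure Ω} {Y : Ω → ℝ}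

lemma integrable_cexp_ofReal_mul_I [IsFiniteMeasure P] (hY : AEStronglyMeasurable Y P) :
    Integrable (fun ω => exp (Y ω * I)) P :=
  (integrable_const (1 : ℝ)).mono'
    ((by fun_prop : Continuous fun x : ℝ => exp (x * I)).comp_aestronglyMeasurable hY)
    (ae_of_all _ fun ω => (norm_exp_ofReal_mul_I (Y ω)).le)

lemma norm_integral_cexp_sub_sum_moments_le [IsFiniteMeasure P] (n : ℕ)
    (hY : AEStronglyMeasurable Y P) (hmom : ∀ k < n, Integrable (fun ω => Y ω ^ k) P)
    (habs : Integrable (fun ω => |Y ω| ^ n) P) :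
    ‖∫ ω, exp (Y ω * I) ∂P -
        ∑ k ∈ Finset.range n, I ^ k / k.factorial * ((∫ ω, Y ω ^ k ∂P : ℝ) : ℂ)‖ ≤
      (∫ ω, |Y ω| ^ n ∂P) / n.factorial := by
  have hterm : ∀ k ∈ Finset.range n,
      Integrable (fun ω => ((Y ω : ℂ) * I) ^ k / k.factorial) P := fun k hk => by
    have h : Integrable (fun ω => ((Y ω ^ k : ℝ) : ℂ)) P := (hmom k (Finset.mem_range.1 hk)).ofReal
    convert h.const_mul (I ^ k / k.factorial) using 2 with ω
    push_cast
    ring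
  have hint : ∫ ω, expIRemainder n (Y ω) ∂P =
      ∫ ω, exp (Y ω * I) ∂P -
        ∑ k ∈ Finset.range n, I ^ k / k.factorial * ((∫ ω, Y ω ^ k ∂P : ℝ) : ℂ) := by
    simp only [expIRemainder]
    rw [integral_sub (integrable_cexp_ofReal_mul_I hY) (integrable_finsetSum _ hterm),
      integral_finsetSum _ hterm]
    congr 1
    refine Finset.sum_congr rfl fun k _ => ?_
    rw [← integral_complex_ofReal, ← integral_const_mul]
    congr 1
    funext ω
    push_cast
    ring
  rw [← hint, ← integral_div]
  exact norm_integral_le_of_norm_le (habs.div_const _)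
    (ae_of_all _ fun ω => norm_expIRemainder_le n (Y ω))

variable [IsProbabilityMeasure P]

lemma norm_integral_cexp_sub_one_le (hY : Integrable Y P) (hY0 : ∫ ω, Y ω ∂P = 0)
    (hY2 : Integrable (fun ω => Y ω ^ 2) P) :
    ‖∫ ω, exp (Y ω * I) ∂P - 1‖ ≤ (∫ ω, Y ω ^ 2 ∂P) / 2 := by
  have h := norm_integral_cexp_sub_sum_moments_le 2 hY.aestronglyMeasurable
    (fun k hk => by interval_cases k <;> simp [hY]) (by simpa using hY2)
  simpa [Finset.sum_range_succ, hY0] using h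

lemma norm_integral_cexp_sub_one_add_le (hY : Integrable Y P) (hY0 : ∫ ω, Y ω ∂P = 0)
    (hY2 : Integrable (fun ω => Y ω ^ 2) P) (hY3 : Integrable (fun ω => |Y ω| ^ 3) P) :
    ‖∫ ω, exp (Y ω * I) ∂P - 1 + (((∫ ω, Y ω ^ 2 ∂P) / 2 : ℝ) : ℂ)‖ ≤
      (∫ ω, |Y ω| ^ 3 ∂P) / 6 := by
  have h := norm_integral_cexp_sub_sum_moments_le 3 hY.aestronglyMeasurable
    (fun k hk => by interval_cases k <;> simp [hY, hY2]) hY3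
  norm_num [Finset.sum_range_succ, hY0, Nat.factorial] at h
  convert h using 2
  push_cast
  ring

end Moments

lemma norm_log_one_add_sub_self_le_sq {z : ℂ} (hz : ‖z‖ ≤ 1 / 2) :
    ‖log (1 + z) - z‖ ≤ ‖z‖ ^ 2 := by
  have hinv : (1 - ‖z‖)⁻¹ ≤ 2 := by
    rw [inv_le_comm₀ (by linarith) two_pos]
    linarith
  calc ‖log (1 + z) - z‖ ≤ ‖z‖ ^ 2 * (1 - ‖z‖)⁻¹ / 2 :=
        norm_log_one_add_sub_self_le (by linarith)
    _ ≤ ‖z‖ ^ 2 * 2 / 2 := by gcongr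
    _ = ‖z‖ ^ 2 := by ring

lemma norm_log_add_le_of_norm_sub_one_le {w : ℂ} {a b : ℝ} (ha : a ≤ 1 / 2)
    (h₁ : ‖w - 1‖ ≤ a) (h₂ : ‖w - 1 + a‖ ≤ b) : ‖log w + a‖ ≤ b + a ^ 2 := by
  have hz := norm_log_one_add_sub_self_le_sq (h₁.trans ha)
  rw [add_sub_cancel] at hz
  calc ‖log w + a‖ = ‖(log w - (w - 1)) + (w - 1 + a)‖ := by ring_nf
    _ ≤ ‖w - 1‖ ^ 2 + b := norm_add_le_of_le hz h₂
    _ ≤ a ^ 2 + b := by gcongr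
    _ = b + a ^ 2 := add_comm _ _

lemma sq_mul_sq_le_one_of_abs_le_one_div {σ t : ℝ} (h : |t| ≤ 1 / σ) : σ ^ 2 * t ^ 2 ≤ 1 := by
  have hσ : 0 ≤ σ := one_div_nonneg.1 ((abs_nonneg t).trans h)
  have h' : |t| * σ ≤ 1 := by
    rcases hσ.eq_or_lt with rfl | hσ
    · simp
    · exact (le_div_iff₀ hσ).1 h
  calc σ ^ 2 * t ^ 2 = (|t| * σ) ^ 2 := by rw [mul_pow, sq_abs, mul_comm]
    _ ≤ 1 := pow_le_one₀ (by positivity) h'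

lemma cexp_neg_mul_I_mul_charF (μ : Measure ℝ) (m t : ℝ) :
    exp (-(m * t) * I) * charF μ t = ∫ x, exp (((t * (x - m) : ℝ) : ℂ) * I) ∂μ := by
  rw [charF, ← integral_const_mul]
  congr 1 with x
  rw [← exp_add]
  push_cast
  ring_nf

theorem stmt19_general (μX : Measure ℝ) [IsProbabilityMeasure μX] (m σ κ : ℝ)
    (hint1 : Integrable (fun x : ℝ => x) μX) (hm : ∫ x, x ∂μX = m)
    (hint2 : Integrable (fun x : ℝ => (x - m) ^ 2) μX) (hv : ∫ x, (x - m) ^ 2 ∂μX = σ ^ 2)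
    (hint3 : Integrable (fun x : ℝ => |x - m| ^ 3) μX) (hκ : ∫ x, |x - m| ^ 3 ∂μX = κ) :
    ∀ t : ℝ, |t| ≤ 1 / σ →
      ‖Complex.log (Complex.exp (-(m * t) * Complex.I) * charF μX t) +
            ((σ ^ 2 * t ^ 2 / 2 : ℝ) : ℂ)‖ ≤
        κ * |t| ^ 3 / 6 + σ ^ 4 * t ^ 4 / 4 := by
  intro t ht
  have hY : Integrable (fun x => t * (x - m)) μX := (hint1.sub (integrable_const m)).const_mul t
  have hY0 : ∫ x, t * (x - m) ∂μX = 0 := by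
    rw [integral_const_mul, integral_sub hint1 (integrable_const m), hm]
    simp
  have hY2 : Integrable (fun x => (t * (x - m)) ^ 2) μX := by
    simpa only [mul_pow] using hint2.const_mul (t ^ 2)
  have hvar : (∫ x, (t * (x - m)) ^ 2 ∂μX) / 2 = σ ^ 2 * t ^ 2 / 2 := by
    simp only [mul_pow, integral_const_mul, hv]
    ring
  have hY3 : Integrable (fun x => |t * (x - m)| ^ 3) μX := by
    simpa only [abs_mul, mul_pow] using hint3.const_mul (|t| ^ 3)
  have habs3 : (∫ x, |t * (x - m)| ^ 3 ∂μX) / 6 = κ * |t| ^ 3 / 6 := by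
    simp only [abs_mul, mul_pow, integral_const_mul, hκ]
    ring
  have hsmall : σ ^ 2 * t ^ 2 / 2 ≤ 1 / 2 := by
    linarith [sq_mul_sq_le_one_of_abs_le_one_div ht]
  rw [cexp_neg_mul_I_mul_charF]
  calc _ ≤ κ * |t| ^ 3 / 6 + (σ ^ 2 * t ^ 2 / 2) ^ 2 :=
        norm_log_add_le_of_norm_sub_one_le hsmall
          (hvar ▸ norm_integral_cexp_sub_one_le hY hY0 hY2)
          (hvar ▸ habs3 ▸ norm_integral_cexp_sub_one_add_le hY hY0 hY2 hY3)
    _ = κ * |t| ^ 3 / 6 + σ ^ 4 * t ^ 4 / 4 := by ring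

/-- **Lemma.** If `X` has mean `μ`, variance `σ² > 0` and absolute third central moment `κ`,
then `|Log(e^{−iμt} φ_X(t)) + σ²t²/2| ≤ κ|t|³/6 + σ⁴t⁴/4` for `|t| ≤ 1/σ`, where `Log` is
the principal branch of the complex logarithm. -/
theorem stmt19 (μX : Measure ℝ) [IsProbabilityMeasure μX] (m σ κ : ℝ) (hσ : 0 < σ)
    (hint1 : Integrable (fun x : ℝ => x) μX) (hm : ∫ x, x ∂μX = m)
    (hint2 : Integrable (fun x : ℝ => (x - m) ^ 2) μX) (hv : ∫ x, (x - m) ^ 2 ∂μX = σ ^ 2)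
    (hint3 : Integrable (fun x : ℝ => |x - m| ^ 3) μX) (hκ : ∫ x, |x - m| ^ 3 ∂μX = κ) :
    ∀ t : ℝ, |t| ≤ 1 / σ →
      ‖Complex.log (Complex.exp (-(m * t) * Complex.I) * charF μX t) +
            ((σ ^ 2 * t ^ 2 / 2 : ℝ) : ℂ)‖ ≤
        κ * |t| ^ 3 / 6 + σ ^ 4 * t ^ 4 / 4 :=
  stmt19_general μX m σ κ hint1 hm hint2 hv hint3 hκ
end
end
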